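/- arXiv:1907.04144 — 10 statements merged into one kernel-verified Lean document; each statement's English description precedes it below -/
import Mathlib

section
/- Let n ≥ 1 and let b₀, b₁, …, bₙ be complex numbers with b₁, …, bₙ not all zero. Let P be the family of monic complex polynomials p(λ) = λⁿ + a₁λⁿ⁻¹ + ⋯ + aₙ₋₁λ + aₙ (with complex coefficients aⱼ) satisfying b₀ + Σⱼ₌₁ⁿ bⱼaⱼ = 0, and let a* = inf{a(p) : p ∈ P} be the infimal abscissa. Define h(λ) = Σⱼ₌₀ⁿ bⱼ·C(n,j)·λʲ. Then the optimization problem always has an optimal solution of the form p*(λ) = (λ − γ)ⁿ ∈ P with Re γ = a*, where −γ is a root of h with largest real part. -/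
open Polynomial

/-- The abscissa of a complex polynomial: the supremum of the real parts of its
roots. -/
noncomputable def abscissaC (p : Polynomial ℂ) : ℝ :=
  sSup {x : ℝ | ∃ z : ℂ, p.eval z = 0 ∧ z.re = x}

/-- The family of monic complex polynomials `λⁿ + a₁λⁿ⁻¹ + ⋯ + aₙ` whose
coefficients satisfy the affine constraint `b₀ + Σⱼ₌₁ⁿ bⱼaⱼ = 0`. -/
def constrainedFamilyC (n : ℕ) (b : ℕ → ℂ) : Set (Polynomial ℂ) :=
  {p | p.Monic ∧ p.natDegree = n ∧
    b 0 + ∑ j ∈ Finset.Icc 1 n, b j * p.coeff (n - j) = 0}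

/-- The auxiliary polynomial `h(λ) = Σⱼ₌₀ⁿ bⱼ·C(n,j)·λʲ`. -/
noncomputable def hPolyC (n : ℕ) (b : ℕ → ℂ) : Polynomial ℂ :=
  ∑ j ∈ Finset.range (n + 1), Polynomial.C (b j * (n.choose j : ℂ)) * Polynomial.X ^ j

namespace BGMO

/-- The linear functional `L p = Σ_{j=0}^n b j * coeff (n-j) p`. -/
noncomputable def Lf (n : ℕ) (b : ℕ → ℂ) (p : Polynomial ℂ) : ℂ :=
  ∑ j ∈ Finset.range (n + 1), b j * p.coeff (n - j)

variable (n : ℕ) (b : ℕ → ℂ)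

lemma Lf_zero : Lf n b 0 = 0 := by simp [Lf]

lemma Lf_add (p q : Polynomial ℂ) : Lf n b (p + q) = Lf n b p + Lf n b q := by
  simp [Lf, mul_add, Finset.sum_add_distrib]

lemma Lf_C_mul (c : ℂ) (p : Polynomial ℂ) : Lf n b (Polynomial.C c * p) = c * Lf n b p := by
  simp only [Lf, Polynomial.coeff_C_mul, Finset.mul_sum]
  exact Finset.sum_congr rfl fun j _ => by ring

lemma Lf_sum {ι : Type*} (s : Finset ι) (f : ι → Polynomial ℂ) :
    Lf n b (∑ i ∈ s, f i) = ∑ i ∈ s, Lf n b (f i) := by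
  classical
  induction s using Finset.cons_induction with
  | empty => simp [Lf_zero]
  | cons a s' ha ih => rw [Finset.sum_cons, Finset.sum_cons, Lf_add, ih]

/-- Map a polynomial with polynomial coefficients by applying `Lf` to each coefficient. -/
noncomputable def mapL (A : Polynomial (Polynomial ℂ)) : Polynomial ℂ :=
  ∑ i ∈ Finset.range (A.natDegree + 1), Polynomial.C (Lf n b (A.coeff i)) * Polynomial.X ^ i

lemma coeff_mapL (A : Polynomial (Polynomial ℂ)) (i : ℕ) :
    (mapL n b A).coeff i = Lf n b (A.coeff i) := by
  classical
  rw [mapL, Polynomial.finset_sum_coeff]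
  simp only [Polynomial.coeff_C_mul, Polynomial.coeff_X_pow, mul_ite, mul_one, mul_zero]
  rw [Finset.sum_ite_eq (Finset.range (A.natDegree + 1)) i (fun j => Lf n b (A.coeff j))]
  split_ifs with h
  · rfl
  · rw [Finset.mem_range, not_lt] at h
    rw [Polynomial.coeff_eq_zero_of_natDegree_lt (by omega), Lf_zero]

lemma natDegree_mapL_le (A : Polynomial (Polynomial ℂ)) :
    (mapL n b A).natDegree ≤ A.natDegree := by
  apply Polynomial.natDegree_le_iff_coeff_eq_zero.mpr
  intro N hN
  rw [coeff_mapL, Polynomial.coeff_eq_zero_of_natDegree_lt hN, Lf_zero]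

lemma eval_mapL (A : Polynomial (Polynomial ℂ)) (z : ℂ) :
    (mapL n b A).eval z = Lf n b (A.eval (Polynomial.C z)) := by
  have h1 : (mapL n b A).eval z
      = ∑ i ∈ Finset.range (A.natDegree + 1), Lf n b (A.coeff i) * z ^ i := by
    rw [Polynomial.eval_eq_sum_range' (Nat.lt_succ_of_le (natDegree_mapL_le n b A))]
    simp [coeff_mapL]
  have h2 : A.eval (Polynomial.C z)
      = ∑ i ∈ Finset.range (A.natDegree + 1), Polynomial.C (z ^ i) * A.coeff i := by
    rw [Polynomial.eval_eq_sum_range' (Nat.lt_succ_self _)]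
    refine Finset.sum_congr rfl fun i _ => ?_
    rw [← Polynomial.C_pow]; ring
  rw [h1, h2, Lf_sum]
  refine Finset.sum_congr rfl fun i _ => ?_
  rw [Lf_C_mul]; ring

lemma derivative_mapL (A : Polynomial (Polynomial ℂ)) :
    (mapL n b A).derivative = mapL n b A.derivative := by
  ext i
  rw [Polynomial.coeff_derivative, coeff_mapL, coeff_mapL, Polynomial.coeff_derivative]
  have hC : ((i : Polynomial ℂ) + 1) = Polynomial.C (((i : ℕ) : ℂ) + 1) := by
    simp [map_add, map_natCast]
  rw [hC, mul_comm (A.coeff (i + 1)) _, Lf_C_mul]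
  ring

/-- Cauchy–Schwarz for multisets of reals. -/
lemma ms_cs (u : Multiset ℝ) :
    u.sum ^ 2 ≤ (u.card : ℝ) * (u.map (fun x => x ^ 2)).sum := by
  induction u using Multiset.induction_on with
  | empty => simp
  | cons x v ih =>
    have hT : (0:ℝ) ≤ (v.map (fun x => x ^ 2)).sum :=
      Multiset.sum_nonneg (by intro y hy; obtain ⟨t, _, rfl⟩ := Multiset.mem_map.mp hy; positivity)
    have hk : (0:ℝ) ≤ (v.card : ℝ) := Nat.cast_nonneg _
    simp only [Multiset.sum_cons, Multiset.card_cons, Multiset.map_cons]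
    push_cast
    rcases eq_or_ne v 0 with hv | hv
    · subst hv; simp
    · have hk1 : (1:ℝ) ≤ (v.card : ℝ) := by
        exact_mod_cast Multiset.card_pos.mpr hv
      have key : 0 ≤ (v.card : ℝ) * (((v.card : ℝ) + 1) * (x ^ 2 + (v.map (fun x => x ^ 2)).sum)
          - (x + v.sum) ^ 2) := by
        nlinarith [sq_nonneg ((v.card : ℝ) * x - v.sum), ih, hT, hk]
      nlinarith [key, hk1]

lemma re_multiset_sum (t : Multiset ℂ) : t.sum.re = (t.map Complex.re).sum := by
  induction t using Multiset.induction_on with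
  | empty => simp
  | cons x v ih => simp [ih]

lemma normSq_eq_norm_sq (z : ℂ) : Complex.normSq z = ‖z‖ ^ 2 := by
  rw [← Complex.sq_norm]

/-- Key disk inequality: if every element of a nonempty multiset satisfies
`re x < c * |x|²` with `c ≤ 0`, then the sum `S` satisfies `c|S|² - m·re S > 0`. -/
lemma ms_split (c : ℝ) (t : Multiset ℂ) :
    (t.map (fun x => c * Complex.normSq x - x.re)).sum
      = c * (t.map Complex.normSq).sum - (t.map Complex.re).sum := by
  induction t using Multiset.induction_on with
  | empty => simp
  | cons x v ih =>
    simp only [Multiset.map_cons, Multiset.sum_cons, ih]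
    ring

lemma suminq (c : ℝ) (hc : c ≤ 0) (t : Multiset ℂ) (ht : t ≠ 0)
    (h : ∀ x ∈ t, x.re < c * Complex.normSq x) :
    0 < c * Complex.normSq t.sum - (t.card : ℝ) * t.sum.re := by
  have hm1 : 0 < t.card := Multiset.card_pos.mpr ht
  set m : ℝ := (t.card : ℝ) with hm
  have hm0 : (0:ℝ) < m := by rw [hm]; exact_mod_cast hm1
  set u : Multiset ℝ := t.map (fun x => ‖x‖) with hu
  have h1 : ‖t.sum‖ ≤ u.sum := norm_multiset_sum_le t
  have hmap : (u.map (fun x => x ^ 2)).sum = (t.map Complex.normSq).sum := by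
    rw [hu, Multiset.map_map]
    congr 1
    exact Multiset.map_congr rfl fun x _ => (normSq_eq_norm_sq x).symm
  have h2 : u.sum ^ 2 ≤ m * (t.map Complex.normSq).sum := by
    have h3 := ms_cs u
    rw [hmap] at h3
    have : (u.card : ℝ) = m := by rw [hu, Multiset.card_map, hm]
    rwa [this] at h3
  have hnorm : Complex.normSq t.sum ≤ m * (t.map Complex.normSq).sum := by
    have h5 : ‖t.sum‖ ^ 2 ≤ u.sum ^ 2 := by
      apply pow_le_pow_left₀ (norm_nonneg _) h1
    calc Complex.normSq t.sum = ‖t.sum‖ ^ 2 := normSq_eq_norm_sq _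
      _ ≤ u.sum ^ 2 := h5
      _ ≤ m * (t.map Complex.normSq).sum := h2
  have hsumpos : 0 < (t.map (fun x => c * Complex.normSq x - x.re)).sum := by
    obtain ⟨x, hx⟩ := Multiset.exists_mem_of_ne_zero ht
    rw [← Multiset.cons_erase hx, Multiset.map_cons, Multiset.sum_cons]
    have hx1 : 0 < c * Complex.normSq x - x.re := by have := h x hx; linarith
    have hx2 : 0 ≤ ((t.erase x).map (fun x => c * Complex.normSq x - x.re)).sum := by
      apply Multiset.sum_nonneg
      intro y hy; obtain ⟨z, hz, rfl⟩ := Multiset.mem_map.mp hy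
      have := h z (Multiset.mem_of_mem_erase hz); linarith
    linarith
  rw [ms_split] at hsumpos
  have hre : t.sum.re = (t.map Complex.re).sum := re_multiset_sum t
  have hcN : c * (m * (t.map Complex.normSq).sum) ≤ c * Complex.normSq t.sum :=
    mul_le_mul_of_nonpos_left hnorm hc
  have hstep : 0 < m * (c * (t.map Complex.normSq).sum - (t.map Complex.re).sum) := by positivity
  nlinarith [hstep, hcN, hre]

/-- Log-derivative formula for a product of linear factors. -/
lemma deriv_prod (s : Multiset ℂ) (w : ℂ) (hw : ∀ r ∈ s, w ≠ r) :
    ((s.map (fun r => X - Polynomial.C r)).prod).derivative.eval w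
      = ((s.map (fun r => X - Polynomial.C r)).prod).eval w
        * (s.map (fun r => (w - r)⁻¹)).sum := by
  induction s using Multiset.induction_on with
  | empty => simp
  | cons r u ih =>
    have hwr : w - r ≠ 0 := sub_ne_zero.mpr (hw r (Multiset.mem_cons_self r u))
    have ih' := ih (fun x hx => hw x (Multiset.mem_cons_of_mem hx))
    simp only [Multiset.map_cons, Multiset.prod_cons, Multiset.sum_cons, Polynomial.derivative_mul,
      Polynomial.derivative_sub, Polynomial.derivative_X, Polynomial.derivative_C, sub_zero,
      one_mul, Polynomial.eval_add, Polynomial.eval_mul, Polynomial.eval_sub, Polynomial.eval_X,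
      Polynomial.eval_C]
    rw [ih']
    field_simp

/-- Laguerre-type lemma: the key analytic step. -/
lemma laguerre (ν : ℕ) (hν : 1 ≤ ν) (g : Polynomial ℂ) (hg : g.natDegree ≤ ν)
    (a : ℝ) (w l : ℂ) (hw : w.re ≤ a) (hl : l.re ≤ a) :
    ∃ ζ : ℂ, ζ.re ≤ a ∧ g.eval ζ = g.eval w + (l - w) * g.derivative.eval w / ν := by
  by_contra hcon
  push_neg at hcon
  set v : ℂ := g.eval w + (l - w) * g.derivative.eval w / ν with hv
  set G : Polynomial ℂ := g - Polynomial.C v with hGdef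
  have hνC : (ν : ℂ) ≠ 0 := Nat.cast_ne_zero.mpr (by omega)
  have hroot : ∀ ζ : ℂ, ζ.re ≤ a → G.eval ζ ≠ 0 := by
    intro ζ hζ h0
    have hgv : g.eval ζ = v := by
      simp only [hGdef, Polynomial.eval_sub, Polynomial.eval_C, sub_eq_zero] at h0
      exact h0
    exact hcon ζ hζ hgv
  have hGw : G.eval w ≠ 0 := hroot w hw
  have hGder : G.derivative = g.derivative := by
    simp [hGdef]
  have hGew : G.eval w = g.eval w - v := by
    simp [hGdef]
  have hkey : (ν : ℂ) * G.eval w + (l - w) * G.derivative.eval w = 0 := by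
    rw [hGder, hGew, hv]
    field_simp
    ring
  have hcard : G.roots.card = G.natDegree :=
    Polynomial.splits_iff_card_roots.mp (IsAlgClosed.splits G)
  have hfac : Polynomial.C G.leadingCoeff * (G.roots.map (fun r => X - Polynomial.C r)).prod = G :=
    Polynomial.C_leadingCoeff_mul_prod_multiset_X_sub_C hcard
  have hre : ∀ r ∈ G.roots, a < r.re := by
    intro r hr
    by_contra hle
    exact hroot r (le_of_not_gt hle) (Polynomial.isRoot_of_mem_roots hr)
  have hdegle : G.natDegree ≤ ν := by
    calc G.natDegree ≤ max g.natDegree (Polynomial.C v).natDegree :=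
          Polynomial.natDegree_sub_le _ _
      _ ≤ ν := by simp [Polynomial.natDegree_C]; exact hg
  rcases eq_or_ne G.roots 0 with hz | hne
  · -- constant case
    have hGc : G = Polynomial.C G.leadingCoeff := by
      rw [← hfac, hz]; simp
    have hder0 : G.derivative.eval w = 0 := by
      conv_lhs => rw [hGc]
      simp
    rw [hder0, mul_zero, add_zero] at hkey
    rcases mul_eq_zero.mp hkey with h | h
    · exact hνC h
    · exact hGw h
  · set s := G.roots with hs
    set P : Polynomial ℂ := (s.map (fun r => X - Polynomial.C r)).prod with hP
    have hwne : ∀ r ∈ s, w ≠ r := by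
      intro r hr he
      have := hre r hr; rw [← he] at this; linarith
    set S : ℂ := (s.map (fun r => (w - r)⁻¹)).sum with hS
    have hder : G.derivative.eval w = G.eval w * S := by
      have hd : P.derivative.eval w = P.eval w * S := deriv_prod s w hwne
      have hGd : G.derivative = Polynomial.C G.leadingCoeff * P.derivative := by
        conv_lhs => rw [← hfac]
        rw [Polynomial.derivative_C_mul]
      rw [hGd, Polynomial.eval_mul, Polynomial.eval_C, hd]
      conv_rhs => rw [← hfac]
      simp only [Polynomial.eval_mul, Polynomial.eval_C]
      ring
    have heq : (ν : ℂ) + (l - w) * S = 0 := by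
      have h1 : G.eval w * ((ν : ℂ) + (l - w) * S) = 0 := by
        rw [hder] at hkey
        linear_combination hkey
      rcases mul_eq_zero.mp h1 with h | h
      · exact absurd h hGw
      · exact h
    set c : ℝ := w.re - a with hc
    have hc0 : c ≤ 0 := sub_nonpos.mpr hw
    set t : Multiset ℂ := s.map (fun r => (w - r)⁻¹) with ht
    have htne : t ≠ 0 := by
      simp only [ht, Ne, Multiset.map_eq_zero]; exact hne
    have hmem : ∀ x ∈ t, x.re < c * Complex.normSq x := by
      intro x hx
      obtain ⟨r, hr, rfl⟩ := Multiset.mem_map.mp hx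
      have hwr : w - r ≠ 0 := sub_ne_zero.mpr (hwne r hr)
      have hN : 0 < Complex.normSq (w - r) := Complex.normSq_pos.mpr hwr
      rw [Complex.inv_re, Complex.normSq_inv]
      have hlt : (w - r).re < c := by
        simp only [Complex.sub_re, hc]
        have := hre r hr; linarith
      rw [div_eq_mul_inv]
      exact mul_lt_mul_of_pos_right hlt (inv_pos.mpr hN)
    have hkeyineq := suminq c hc0 t htne hmem
    have htsum : t.sum = S := rfl
    have htcard : t.card = s.card := Multiset.card_map _ _
    rw [htsum, htcard] at hkeyineq
    have hm1 : 0 < s.card := Multiset.card_pos.mpr hne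
    have hmpos : (0:ℝ) < (s.card : ℝ) := by exact_mod_cast hm1
    have hmle : (s.card : ℝ) ≤ (ν : ℝ) := by
      have hcle : s.card ≤ ν := by rw [hcard]; exact hdegle
      exact_mod_cast hcle
    have hS0 : S ≠ 0 := by
      intro h0
      rw [h0] at hkeyineq
      simp at hkeyineq
    have hNS : 0 < Complex.normSq S := Complex.normSq_pos.mpr hS0
    have hwl : w - l = (ν : ℂ) * S⁻¹ := by
      rw [eq_comm, mul_inv_eq_iff_eq_mul₀ hS0]
      linear_combination heq
    have hre_wl : w.re - l.re = (ν : ℝ) * (S.re / Complex.normSq S) := by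
      have h1 : (w - l).re = ((ν : ℂ) * S⁻¹).re := by rw [hwl]
      simpa [Complex.sub_re, Complex.mul_re, Complex.inv_re, Complex.inv_im,
        Complex.natCast_re, Complex.natCast_im] using h1
    have hq : S.re / Complex.normSq S < c / (s.card : ℝ) := by
      rw [div_lt_div_iff₀ hNS hmpos]
      nlinarith [hkeyineq]
    have hνpos : (0:ℝ) < (ν : ℝ) := by exact_mod_cast hν
    have h1 : (ν : ℝ) * (S.re / Complex.normSq S) < (ν : ℝ) * (c / (s.card : ℝ)) :=
      mul_lt_mul_of_pos_left hq hνpos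
    have h2 : (ν : ℝ) * (c / (s.card : ℝ)) ≤ c := by
      rw [mul_div_assoc', div_le_iff₀ hmpos]
      nlinarith [mul_le_mul_of_nonpos_right hmle hc0]
    have hfinal : w.re - l.re < c := by
      rw [hre_wl]; linarith
    rw [hc] at hfinal
    linarith


/-- One replacement step of the Grace–Walsh–Szegő coincidence argument. -/
lemma step (a : ℝ) (k : ℕ) (q : Polynomial ℂ) (l w : ℂ) (hl : l.re ≤ a) (hw : w.re ≤ a) :
    ∃ ζ : ℂ, ζ.re ≤ a ∧
      Lf n b (q * (X - Polynomial.C l) * (X - Polynomial.C w) ^ k)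
        = Lf n b (q * (X - Polynomial.C ζ) ^ (k + 1)) := by
  set A : Polynomial (Polynomial ℂ) :=
    Polynomial.C q * (Polynomial.C Polynomial.X - Polynomial.X) ^ (k + 1) with hA
  set g : Polynomial ℂ := mapL n b A with hg
  have hAeval : ∀ z : ℂ, A.eval (Polynomial.C z) = q * (X - Polynomial.C z) ^ (k + 1) := by
    intro z
    simp [hA]
  have hgeval : ∀ z : ℂ, g.eval z = Lf n b (q * (X - Polynomial.C z) ^ (k + 1)) := by
    intro z
    rw [hg, eval_mapL, hAeval]
  have hAdeg : A.natDegree ≤ k + 1 := by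
    have hB : ((Polynomial.C Polynomial.X - Polynomial.X : Polynomial (Polynomial ℂ)) ^ (k + 1)).natDegree
        ≤ (k + 1) * 1 := by
      refine le_trans (Polynomial.natDegree_pow_le) ?_
      apply Nat.mul_le_mul_left
      refine le_trans (Polynomial.natDegree_sub_le _ _) ?_
      simp [Polynomial.natDegree_C]
    calc A.natDegree ≤ (Polynomial.C q).natDegree
          + ((Polynomial.C Polynomial.X - Polynomial.X : Polynomial (Polynomial ℂ)) ^ (k + 1)).natDegree :=
        Polynomial.natDegree_mul_le
      _ ≤ 0 + (k + 1) * 1 := add_le_add (by simp [Polynomial.natDegree_C]) hB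
      _ = k + 1 := by ring
  have hgdeg : g.natDegree ≤ k + 1 := le_trans (natDegree_mapL_le n b A) hAdeg
  have hAder : A.derivative.eval (Polynomial.C w)
      = Polynomial.C (-((k : ℂ) + 1)) * (q * (X - Polynomial.C w) ^ k) := by
    rw [hA, Polynomial.derivative_C_mul, Polynomial.derivative_pow]
    simp only [Polynomial.derivative_sub, Polynomial.derivative_C, Polynomial.derivative_X,
      zero_sub, Nat.add_sub_cancel]
    simp only [Polynomial.eval_mul, Polynomial.eval_C, Polynomial.eval_neg, Polynomial.eval_one,
      Polynomial.eval_pow, Polynomial.eval_sub, Polynomial.eval_X, Polynomial.eval_natCast]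
    have hcast : ((k + 1 : ℕ) : Polynomial ℂ) = Polynomial.C ((k : ℂ) + 1) := by
      simp [map_add, map_natCast]
    rw [hcast, Polynomial.C_neg]
    ring
  have hLder : g.derivative.eval w = -((k : ℂ) + 1) * Lf n b (q * (X - Polynomial.C w) ^ k) := by
    rw [hg, derivative_mapL, eval_mapL, hAder, Lf_C_mul]
  have hsplit : q * (X - Polynomial.C l) * (X - Polynomial.C w) ^ k
      = q * (X - Polynomial.C w) ^ (k + 1)
        + Polynomial.C (w - l) * (q * (X - Polynomial.C w) ^ k) := by
    rw [Polynomial.C_sub]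
    ring
  have hk1 : ((k : ℂ) + 1) ≠ 0 := by
    have h0 : ((k : ℂ) + 1) = ((k + 1 : ℕ) : ℂ) := by push_cast; ring
    rw [h0]
    exact_mod_cast Nat.succ_ne_zero k
  have hval : Lf n b (q * (X - Polynomial.C l) * (X - Polynomial.C w) ^ k)
      = g.eval w + (l - w) * g.derivative.eval w / ((k + 1 : ℕ) : ℂ) := by
    rw [hsplit, Lf_add, Lf_C_mul, hgeval w, hLder]
    push_cast
    field_simp
    ring
  obtain ⟨ζ, hζ, hζeq⟩ := laguerre (k + 1) (by omega) g hgdeg a w l hw hl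
  exact ⟨ζ, hζ, by rw [hval, ← hζeq, hgeval]⟩

/-- Coincidence theorem: the value of `Lf` on a product of linear factors with roots in a
half-plane is attained on a pure power with root in the same half-plane. -/
lemma coin (a : ℝ) (s : Multiset ℂ) :
    ∀ q : Polynomial ℂ, (∀ z ∈ s, z.re ≤ a) → s ≠ 0 →
    ∃ ζ : ℂ, ζ.re ≤ a ∧
      Lf n b (q * (s.map (fun r => X - Polynomial.C r)).prod)
        = Lf n b (q * (X - Polynomial.C ζ) ^ s.card) := by
  induction s using Multiset.induction_on with
  | empty => intro q _ hne; exact absurd rfl hne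
  | cons x v ih =>
    intro q hs _
    have hx : x.re ≤ a := hs x (Multiset.mem_cons_self x v)
    rcases eq_or_ne v 0 with hv | hv
    · subst hv
      exact ⟨x, hx, by simp⟩
    · have hsv : ∀ z ∈ v, z.re ≤ a := fun z hz => hs z (Multiset.mem_cons_of_mem hz)
      obtain ⟨w, hw, hweq⟩ := ih (q * (X - Polynomial.C x)) hsv hv
      obtain ⟨ζ, hζ, hζeq⟩ := step n b a v.card q x w hx hw
      refine ⟨ζ, hζ, ?_⟩
      rw [Multiset.map_cons, Multiset.prod_cons, Multiset.card_cons, ← mul_assoc]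
      rw [hweq, hζeq]

lemma range_split : Finset.range (n + 1) = insert 0 (Finset.Icc 1 n) := by
  ext x
  simp only [Finset.mem_range, Finset.mem_insert, Finset.mem_Icc, Nat.lt_succ_iff]
  omega

lemma Lf_eq (p : Polynomial ℂ) (hp : p.coeff n = 1) :
    Lf n b p = b 0 + ∑ j ∈ Finset.Icc 1 n, b j * p.coeff (n - j) := by
  rw [Lf, range_split, Finset.sum_insert (by simp)]
  simp [hp]

lemma Lpow (ζ : ℂ) : Lf n b ((X - Polynomial.C ζ) ^ n) = (hPolyC n b).eval (-ζ) := by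
  rw [Lf, hPolyC, Polynomial.eval_finset_sum]
  apply Finset.sum_congr rfl
  intro j hj
  have hjn : j ≤ n := by rw [Finset.mem_range] at hj; omega
  have hcoeff : ((X - Polynomial.C ζ) ^ n).coeff (n - j) = (-ζ) ^ j * (n.choose j : ℂ) := by
    rw [sub_eq_add_neg, ← Polynomial.C_neg, Polynomial.coeff_X_add_C_pow,
      Nat.sub_sub_self hjn, Nat.choose_symm hjn]
  rw [hcoeff]
  simp only [Polynomial.eval_mul, Polynomial.eval_C, Polynomial.eval_pow, Polynomial.eval_X]
  ring

end BGMO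

/-- Burke–Guillaume–Mordukhovich–Overton abscissa minimization (complex case):
the constrained abscissa-minimization problem always has an optimal solution of
the form `p*(λ) = (λ − γ)ⁿ` with `Re γ = a*`, where `−γ` is a root of `h` with
largest real part. -/
theorem abscissa_minimization_complex (n : ℕ) (hn : 1 ≤ n) (b : ℕ → ℂ)
    (hb : ∃ j, 1 ≤ j ∧ j ≤ n ∧ b j ≠ 0) :
    ∃ γ : ℂ,
      (Polynomial.X - Polynomial.C γ) ^ n ∈ constrainedFamilyC n b ∧
      abscissaC ((Polynomial.X - Polynomial.C γ) ^ n)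
        = sInf (abscissaC '' constrainedFamilyC n b) ∧
      γ.re = sInf (abscissaC '' constrainedFamilyC n b) ∧
      (hPolyC n b).eval (-γ) = 0 ∧
      ∀ z : ℂ, (hPolyC n b).eval z = 0 → z.re ≤ (-γ).re := by
  classical
  obtain ⟨j, hj1, hjn, hbj⟩ := hb
  set h : Polynomial ℂ := hPolyC n b with hh
  have hcoeffj : h.coeff j = b j * (n.choose j : ℂ) := by
    rw [hh, hPolyC, Polynomial.finset_sum_coeff]
    simp only [Polynomial.coeff_C_mul, Polynomial.coeff_X_pow, mul_ite, mul_one, mul_zero]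
    rw [Finset.sum_ite_eq (Finset.range (n + 1)) j (fun x => b x * (n.choose x : ℂ))]
    simp [Nat.lt_succ_iff, hjn]
  have hcne : h.coeff j ≠ 0 := by
    rw [hcoeffj]
    refine mul_ne_zero hbj ?_
    exact_mod_cast (Nat.choose_pos hjn).ne'
  have hh0 : h ≠ 0 := fun h0 => hcne (by rw [h0]; simp)
  have hdeg1 : 1 ≤ h.natDegree := le_trans hj1 (Polynomial.le_natDegree_of_ne_zero hcne)
  have hdegpos : 0 < h.degree := Polynomial.natDegree_pos_iff_degree_pos.mp (by omega)
  obtain ⟨z₀, hz₀⟩ := Complex.exists_root hdegpos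
  have hz₀r : z₀ ∈ h.roots.toFinset := by
    rw [Multiset.mem_toFinset, Polynomial.mem_roots hh0]; exact hz₀
  obtain ⟨μ, hμmem, hμmax⟩ :=
    Finset.exists_max_image h.roots.toFinset (fun z => z.re) ⟨z₀, hz₀r⟩
  have hμroot : h.eval μ = 0 := by
    rw [Multiset.mem_toFinset, Polynomial.mem_roots hh0] at hμmem; exact hμmem
  have hmax : ∀ z : ℂ, h.eval z = 0 → z.re ≤ μ.re := by
    intro z hz
    exact hμmax z (by rw [Multiset.mem_toFinset, Polynomial.mem_roots hh0]; exact hz)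
  set γ : ℂ := -μ with hγ
  have hnγ : -γ = μ := by rw [hγ, neg_neg]
  have hn0 : n ≠ 0 := by omega
  -- the candidate polynomial
  set p₀ : Polynomial ℂ := (Polynomial.X - Polynomial.C γ) ^ n with hp₀
  have hmon : p₀.Monic := (Polynomial.monic_X_sub_C γ).pow n
  have hdeg₀ : p₀.natDegree = n := by
    rw [hp₀, Polynomial.natDegree_pow, Polynomial.natDegree_X_sub_C, mul_one]
  have hcoeffn : p₀.coeff n = 1 := by
    have := hmon.coeff_natDegree
    rwa [hdeg₀] at this
  have hLp₀ : BGMO.Lf n b p₀ = h.eval (-γ) := BGMO.Lpow n b γ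
  have hevalγ : h.eval (-γ) = 0 := by rw [hnγ]; exact hμroot
  have hmem : p₀ ∈ constrainedFamilyC n b := by
    refine ⟨hmon, hdeg₀, ?_⟩
    have := (BGMO.Lf_eq n b p₀ hcoeffn).symm.trans (hLp₀.trans hevalγ)
    exact this
  -- abscissa of the candidate
  have habs : abscissaC p₀ = γ.re := by
    rw [abscissaC]
    have hset : {x : ℝ | ∃ z : ℂ, p₀.eval z = 0 ∧ z.re = x} = {γ.re} := by
      ext x
      simp only [Set.mem_setOf_eq, Set.mem_singleton_iff, hp₀, Polynomial.eval_pow,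
        Polynomial.eval_sub, Polynomial.eval_X, Polynomial.eval_C,
        pow_eq_zero_iff hn0, sub_eq_zero]
      constructor
      · rintro ⟨z, rfl, rfl⟩; rfl
      · rintro rfl; exact ⟨γ, rfl, rfl⟩
    rw [hset, csSup_singleton]
  -- lower bound for all members of the family
  have hlb : ∀ p ∈ constrainedFamilyC n b, γ.re ≤ abscissaC p := by
    rintro p ⟨hmonp, hdegp, hconstr⟩
    have hp0 : p ≠ 0 := hmonp.ne_zero
    have hcard : p.roots.card = n := by
      rw [Polynomial.splits_iff_card_roots.mp (IsAlgClosed.splits p), hdegp]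
    have hrne : p.roots ≠ 0 := by
      intro h0
      rw [h0] at hcard
      simp at hcard
      omega
    have hseteq : {x : ℝ | ∃ z : ℂ, p.eval z = 0 ∧ z.re = x}
        = (fun z : ℂ => z.re) '' (p.roots.toFinset : Set ℂ) := by
      ext x
      simp only [Set.mem_setOf_eq, Set.mem_image, Finset.mem_coe, Multiset.mem_toFinset,
        Polynomial.mem_roots hp0, Polynomial.IsRoot.def]
    have hbdd : BddAbove {x : ℝ | ∃ z : ℂ, p.eval z = 0 ∧ z.re = x} := by
      rw [hseteq]
      exact (p.roots.toFinset.finite_toSet.image _).bddAbove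
    have hub : ∀ z ∈ p.roots, z.re ≤ abscissaC p := by
      intro z hz
      refine le_csSup hbdd ?_
      exact ⟨z, ((Polynomial.mem_roots hp0).mp hz : p.eval z = 0), rfl⟩
    obtain ⟨ζ, hζ, hζeq⟩ := BGMO.coin n b (abscissaC p) p.roots 1 hub hrne
    rw [one_mul, one_mul, hcard] at hζeq
    have hprod : (p.roots.map (fun r => Polynomial.X - Polynomial.C r)).prod = p := by
      have h2 := (IsAlgClosed.splits p).eq_prod_roots
      rw [hmonp.leadingCoeff, Polynomial.C_1, one_mul] at h2
      exact h2.symm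
    have hLp : BGMO.Lf n b p = 0 := by
      rw [BGMO.Lf_eq n b p (by have := hmonp.coeff_natDegree; rwa [hdegp] at this)]
      exact hconstr
    have hζroot : h.eval (-ζ) = 0 := by
      rw [← BGMO.Lpow n b ζ, ← hζeq, hprod, hLp]
    have h5 : (-ζ).re ≤ μ.re := hmax (-ζ) hζroot
    have h6 : γ.re ≤ ζ.re := by
      rw [hγ]
      simp only [Complex.neg_re] at h5 ⊢
      linarith
    exact le_trans h6 hζ
  -- the infimum
  have hmemI : γ.re ∈ abscissaC '' constrainedFamilyC n b := ⟨p₀, hmem, habs⟩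
  have hlbI : ∀ y ∈ abscissaC '' constrainedFamilyC n b, γ.re ≤ y := by
    rintro y ⟨p, hp, rfl⟩
    exact hlb p hp
  have hinf : sInf (abscissaC '' constrainedFamilyC n b) = γ.re :=
    le_antisymm (csInf_le ⟨γ.re, hlbI⟩ hmemI) (le_csInf ⟨γ.re, hmemI⟩ hlbI)
  refine ⟨γ, hmem, ?_, ?_, hevalγ, ?_⟩
  · rw [hinf]; exact habs
  · rw [hinf]
  · intro z hz
    rw [hnγ]
    exact hmax z hz
end

section
/- Let a₁, a₂, a₃, a₄ be real numbers. All complex roots of the quartic polynomial p(λ) = λ⁴ + a₁λ³ + a₂λ² + a₃λ + a₄ have negative real part if and only if a₁ > 0, a₂ > 0, a₃ > 0, a₄ > 0 and H < 0, where H := a₁²a₄ + a₃² − a₁a₂a₃. -/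
/-!
A real monic quartic is the product of two real monic quadratics `z ^ 2 + b z + c` and
`z ^ 2 + d z + e`: split off the quadratic of a conjugate pair of nonreal roots, or pair up two
real roots. Such a quadratic has all its roots in the open left half-plane iff `b, c > 0`. In terms
of the factors, `H = -b d ((c - e) ^ 2 + a₁ a₃)`, and this identity turns the Hurwitz conditions on
the `aᵢ` into the positivity of `b, c, d, e`.
-/

def HurwitzStable (f : ℂ → ℂ) : Prop :=
  ∀ z, f z = 0 → z.re < 0

theorem hurwitzStable_mul_iff {f g : ℂ → ℂ} :
    HurwitzStable (f * g) ↔ HurwitzStable f ∧ HurwitzStable g := by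
  simp only [HurwitzStable, Pi.mul_apply, mul_eq_zero, or_imp, forall_and]

theorem quadratic_root_re_neg {b c : ℝ} (hb : 0 < b) (hc : 0 < c) {z : ℂ}
    (hz : z ^ 2 + b * z + c = 0) : z.re < 0 := by
  have hre := congrArg Complex.re hz
  have him := congrArg Complex.im hz
  simp only [pow_two, Complex.add_re, Complex.mul_re, Complex.ofReal_re, Complex.ofReal_im,
    Complex.add_im, Complex.mul_im, Complex.zero_re, Complex.zero_im] at hre him
  by_contra! hz_re
  have h_im : z.im = 0 := by
    have : z.im * (2 * z.re + b) = 0 := by linarith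
    exact (mul_eq_zero.mp this).resolve_right (by positivity)
  rw [h_im] at hre
  nlinarith

theorem exists_quadratic_root_re_nonneg_of_linear_coeff_nonpos (b c : ℝ) (hb : b ≤ 0) :
    ∃ z : ℂ, z ^ 2 + b * z + c = 0 ∧ 0 ≤ z.re := by
  obtain ⟨s, hs⟩ := IsAlgClosed.exists_eq_mul_self ((b : ℂ) ^ 2 - 4 * c)
  wlog hs_re : 0 ≤ s.re generalizing s
  · exact this (-s) (by rw [hs, neg_mul_neg]) (by rw [Complex.neg_re]; linarith)
  refine ⟨(-b + s) / 2, by linear_combination (1 / 4 : ℂ) * hs.symm, ?_⟩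
  simp only [Complex.div_ofNat_re, Complex.add_re, Complex.neg_re, Complex.ofReal_re]
  linarith

theorem exists_quadratic_root_re_nonneg_of_const_coeff_nonpos (b c : ℝ) (hc : c ≤ 0) :
    ∃ z : ℂ, z ^ 2 + b * z + c = 0 ∧ 0 ≤ z.re := by
  have hdisc : 0 ≤ b ^ 2 - 4 * c := by nlinarith [sq_nonneg b]
  set s := √(b ^ 2 - 4 * c)
  have hs : (s : ℂ) ^ 2 = b ^ 2 - 4 * c := by exact_mod_cast Real.sq_sqrt hdisc
  have hbs : b ≤ s := (le_abs_self b).trans (Real.abs_le_sqrt (by linarith))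
  refine ⟨((-b + s) / 2 : ℝ), by push_cast; linear_combination (1 / 4 : ℂ) * hs, ?_⟩
  rw [Complex.ofReal_re]
  linarith

theorem hurwitzStable_quadratic_iff (b c : ℝ) :
    HurwitzStable (fun z => z ^ 2 + b * z + c) ↔ 0 < b ∧ 0 < c := by
  refine ⟨fun h => ?_, fun ⟨hb, hc⟩ z hz => quadratic_root_re_neg hb hc hz⟩
  by_contra! hbc
  obtain ⟨z, hz, hz_re⟩ := (le_or_gt b 0).elim
    (exists_quadratic_root_re_nonneg_of_linear_coeff_nonpos b c)
    fun hb => exists_quadratic_root_re_nonneg_of_const_coeff_nonpos b c (hbc hb)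
  exact (h z hz).not_ge hz_re

theorem eq_zero_of_mul_add_eq_zero_of_im_ne_zero {α β : ℝ} {r : ℂ} (h : α * r + β = 0)
    (hr : r.im ≠ 0) : α = 0 ∧ β = 0 := by
  have him := congrArg Complex.im h
  have hre := congrArg Complex.re h
  simp only [Complex.add_im, Complex.mul_im, Complex.ofReal_re, Complex.ofReal_im,
    Complex.add_re, Complex.mul_re, Complex.zero_re, Complex.zero_im] at him hre
  have hα : α = 0 := by simpa [hr] using him
  subst hα
  simpa using hre

theorem exists_quadratic_factorization_of_im_ne_zero {a₁ a₂ a₃ a₄ : ℝ} {r : ℂ}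
    (hr : r ^ 4 + a₁ * r ^ 3 + a₂ * r ^ 2 + a₃ * r + a₄ = 0) (him : r.im ≠ 0) :
    ∃ b c d e : ℝ, a₁ = b + d ∧ a₂ = c + e + b * d ∧ a₃ = b * e + c * d ∧ a₄ = c * e := by
  -- `z ^ 2 + b z + c = (z - r) (z - conj r)`
  set b : ℝ := -2 * r.re
  set c : ℝ := r.re ^ 2 + r.im ^ 2
  set d : ℝ := a₁ - b
  set e : ℝ := a₂ - c - b * d
  have hq : r ^ 2 + b * r + c = 0 := by
    conv_lhs => rw [← Complex.re_add_im r]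
    push_cast [b, c]
    linear_combination (r.im : ℂ) ^ 2 * Complex.I_sq
  -- the remainder of the quartic on division by the quadratic factor `z ^ 2 + b z + c`
  have hrem : ((a₃ - (b * e + c * d) : ℝ) : ℂ) * r + ((a₄ - c * e : ℝ) : ℂ) = 0 := by
    push_cast [d, e]
    linear_combination hr - (r ^ 2 + (a₁ - b) * r + (a₂ - c - b * (a₁ - b))) * hq
  obtain ⟨h₃, h₄⟩ := eq_zero_of_mul_add_eq_zero_of_im_ne_zero hrem him
  exact ⟨b, c, d, e, by ring, by ring, by linarith, by linarith⟩

open Polynomial in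
theorem exists_quadratic_factorization (a₁ a₂ a₃ a₄ : ℝ) :
    ∃ b c d e : ℝ, a₁ = b + d ∧ a₂ = c + e + b * d ∧ a₃ = b * e + c * d ∧ a₄ = c * e := by
  obtain ⟨r, hr⟩ := Complex.exists_root
    (f := X ^ 4 + C (a₁ : ℂ) * X ^ 3 + C (a₂ : ℂ) * X ^ 2 + C (a₃ : ℂ) * X + C (a₄ : ℂ))
    (by refine (show (0 : WithBot ℕ) < 4 by decide).trans_eq (Eq.symm ?_); compute_degree!)
  simp only [IsRoot, eval_add, eval_mul, eval_pow, eval_C, eval_X] at hr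
  rcases ne_or_eq r.im 0 with hr_im | hr_im
  · exact exists_quadratic_factorization_of_im_ne_zero hr hr_im
  obtain ⟨t, rfl⟩ : ∃ t : ℝ, r = t := ⟨r.re, Complex.ext rfl (by simp [hr_im])⟩
  -- the quotient of the quartic by `z - t`
  obtain ⟨w, hw⟩ := Complex.exists_root
    (f := X ^ 3 + C ((a₁ + t : ℝ) : ℂ) * X ^ 2 + C ((a₂ + a₁ * t + t ^ 2 : ℝ) : ℂ) * X
      + C ((a₃ + a₂ * t + a₁ * t ^ 2 + t ^ 3 : ℝ) : ℂ))
    (by refine (show (0 : WithBot ℕ) < 3 by decide).trans_eq (Eq.symm ?_); compute_degree!)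
  simp only [IsRoot, eval_add, eval_mul, eval_pow, eval_C, eval_X] at hw
  rcases ne_or_eq w.im 0 with hw_im | hw_im
  · refine exists_quadratic_factorization_of_im_ne_zero (r := w) ?_ hw_im
    push_cast at hw
    linear_combination (w - t) * hw + hr
  obtain ⟨s, rfl⟩ : ∃ s : ℝ, w = s := ⟨w.re, Complex.ext rfl (by simp [hw_im])⟩
  have ht : t ^ 4 + a₁ * t ^ 3 + a₂ * t ^ 2 + a₃ * t + a₄ = 0 := by exact_mod_cast hr
  have hs : s ^ 3 + (a₁ + t) * s ^ 2 + (a₂ + a₁ * t + t ^ 2) * s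
      + (a₃ + a₂ * t + a₁ * t ^ 2 + t ^ 3) = 0 := by exact_mod_cast hw
  exact ⟨-(t + s), t * s, a₁ + t + s, a₂ + a₁ * t + t ^ 2 + (a₁ + t) * s + s ^ 2,
    by ring, by ring, by linear_combination hs, by linear_combination ht - t * hs⟩

theorem hurwitz_quantity_eq (b c d e : ℝ) :
    (b + d) ^ 2 * (c * e) + (b * e + c * d) ^ 2 - (b + d) * (c + e + b * d) * (b * e + c * d)
      = -(b * d * ((c - e) ^ 2 + (b + d) * (b * e + c * d))) := by
  ring

theorem quadratic_factors_pos_iff (b c d e : ℝ) :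
    (0 < b ∧ 0 < c) ∧ (0 < d ∧ 0 < e) ↔
      0 < b + d ∧ 0 < c + e + b * d ∧ 0 < b * e + c * d ∧ 0 < c * e ∧
        (b + d) ^ 2 * (c * e) + (b * e + c * d) ^ 2 - (b + d) * (c + e + b * d) * (b * e + c * d)
          < 0 := by
  rw [hurwitz_quantity_eq, neg_lt_zero]
  constructor
  · rintro ⟨⟨hb, hc⟩, hd, he⟩
    refine ⟨by positivity, by positivity, by positivity, by positivity, ?_⟩
    have : 0 < (b + d) * (b * e + c * d) := by positivity
    positivity
  · rintro ⟨h₁, -, h₃, h₄, hH⟩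
    have hbd : 0 < b * d := pos_of_mul_pos_left hH (by positivity)
    obtain ⟨hb, hd⟩ := (mul_pos_iff.mp hbd).resolve_right fun h => by linarith [h.1, h.2]
    obtain ⟨hc, he⟩ := (mul_pos_iff.mp h₄).resolve_right fun h => by
      nlinarith [mul_neg_of_pos_of_neg hb h.2, mul_neg_of_neg_of_pos h.1 hd]
    exact ⟨⟨hb, hc⟩, hd, he⟩

/-- Routh–Hurwitz criterion for a real quartic: all complex roots of
`λ⁴ + a₁λ³ + a₂λ² + a₃λ + a₄` have negative real part iff
`a₁ > 0`, `a₂ > 0`, `a₃ > 0`, `a₄ > 0` and `H := a₁²a₄ + a₃² − a₁a₂a₃ < 0`. -/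
theorem quartic_hurwitz_criterion (a₁ a₂ a₃ a₄ : ℝ) :
    (∀ z : ℂ, z ^ 4 + (a₁ : ℂ) * z ^ 3 + (a₂ : ℂ) * z ^ 2 + (a₃ : ℂ) * z + (a₄ : ℂ) = 0 →
      z.re < 0) ↔
    (0 < a₁ ∧ 0 < a₂ ∧ 0 < a₃ ∧ 0 < a₄ ∧
      a₁ ^ 2 * a₄ + a₃ ^ 2 - a₁ * a₂ * a₃ < 0) := by
  obtain ⟨b, c, d, e, rfl, rfl, rfl, rfl⟩ := exists_quadratic_factorization a₁ a₂ a₃ a₄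
  have hfactor : (fun z : ℂ => z ^ 4 + ((b + d : ℝ) : ℂ) * z ^ 3
      + ((c + e + b * d : ℝ) : ℂ) * z ^ 2 + ((b * e + c * d : ℝ) : ℂ) * z + ((c * e : ℝ) : ℂ))
      = (fun z : ℂ => z ^ 2 + b * z + c) * (fun z : ℂ => z ^ 2 + d * z + e) := by
    ext z
    simp only [Pi.mul_apply]
    push_cast
    ring
  change HurwitzStable _ ↔ _
  rw [hfactor, hurwitzStable_mul_iff, hurwitzStable_quadratic_iff, hurwitzStable_quadratic_iff,
    quadratic_factors_pos_iff]
end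

section
/- Let a₁, a₂, a₃, a₄ be real numbers and suppose the quartic polynomial λ⁴ + a₁λ³ + a₂λ² + a₃λ + a₄ has four distinct complex roots. Then all roots have non-positive real part if and only if one of the following two sets of conditions holds: (A) a₁ > 0, a₂ > 0, a₃ > 0, a₄ ≥ 0 and a₁a₂a₃ ≥ a₁²a₄ + a₃²; or (B) a₁ = 0, a₃ = 0, a₂ > 0, a₄ > 0 and a₂ > 2√a₄. -/
lemma sq_real_im {z : ℂ} {c : ℝ} (h : z ^ 2 = (c : ℂ)) (hc : 0 ≤ c) : z.im = 0 := by
  have hre := congrArg Complex.re h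
  have him := congrArg Complex.im h
  simp [pow_two, Complex.mul_re, Complex.mul_im] at hre him
  have hy : z.re * z.im = 0 := by linarith
  rcases mul_eq_zero.1 hy with h0 | h0
  · nlinarith [sq_nonneg z.im]
  · exact h0

lemma quad_root_re (p q : ℝ) (hp : 0 ≤ p) (hq : 0 ≤ q) (z : ℂ)
    (hz : z ^ 2 + (p : ℂ) * z + (q : ℂ) = 0) : z.re ≤ 0 := by
  by_contra hx
  push_neg at hx
  have hre := congrArg Complex.re hz
  have him := congrArg Complex.im hz
  simp [pow_two, Complex.mul_re, Complex.mul_im] at hre him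
  have hy : z.im * (z.re + (z.re + p)) = 0 := by linarith
  have : z.im = 0 := by
    rcases mul_eq_zero.1 hy with h0 | h0
    · exact h0
    · nlinarith
  nlinarith [sq_nonneg z.re]

lemma quad_nonneg (p q : ℝ) (u v : ℂ) (hs : u + v = ((-p : ℝ) : ℂ))
    (hpr : u * v = ((q : ℝ) : ℂ)) (hu : u.re ≤ 0) (hv : v.re ≤ 0) : 0 ≤ p ∧ 0 ≤ q := by
  have hsre := congrArg Complex.re hs
  simp at hsre
  refine ⟨by linarith, ?_⟩
  rcases le_or_gt (p ^ 2 - 4 * q) 0 with hd | hd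
  · nlinarith
  · have hu2 : u ^ 2 + (p : ℂ) * u + (q : ℂ) = 0 := by
      have h0 : u ^ 2 - (u + v) * u + u * v = 0 := by ring
      rw [hs, hpr] at h0
      push_cast at h0 ⊢
      linear_combination h0
    have hv2 : v ^ 2 + (p : ℂ) * v + (q : ℂ) = 0 := by
      have h0 : v ^ 2 - (u + v) * v + u * v = 0 := by ring
      rw [hs, hpr] at h0
      push_cast at h0 ⊢
      linear_combination h0
    have huim : u.im = 0 := by
      have h1 : (2 * u + (p : ℂ)) ^ 2 = ((p ^ 2 - 4 * q : ℝ) : ℂ) := by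
        push_cast
        linear_combination 4 * hu2
      have := sq_real_im h1 (le_of_lt hd)
      simpa using this
    have hvim : v.im = 0 := by
      have h1 : (2 * v + (p : ℂ)) ^ 2 = ((p ^ 2 - 4 * q : ℝ) : ℂ) := by
        push_cast
        linear_combination 4 * hv2
      have := sq_real_im h1 (le_of_lt hd)
      simpa using this
    have hq' := congrArg Complex.re hpr
    simp [Complex.mul_re, huim, hvim] at hq'
    nlinarith [mul_nonneg (neg_nonneg.2 hu) (neg_nonneg.2 hv)]

lemma bottema_key (a₁ a₂ a₃ a₄ : ℝ) (w₁ w₂ w₃ w₄ : ℂ)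
    (h12 : w₁ ≠ w₂) (h13 : w₁ ≠ w₃) (h14 : w₁ ≠ w₄)
    (h23 : w₂ ≠ w₃) (h24 : w₂ ≠ w₄) (h34 : w₃ ≠ w₄)
    (hfac : ∀ z : ℂ, z ^ 4 + (a₁ : ℂ) * z ^ 3 + (a₂ : ℂ) * z ^ 2 + (a₃ : ℂ) * z + (a₄ : ℂ)
      = (z - w₁) * (z - w₂) * (z - w₃) * (z - w₄))
    (hs12 : (w₁ + w₂).im = 0) (hp12 : (w₁ * w₂).im = 0)
    (hs34 : (w₃ + w₄).im = 0) (hp34 : (w₃ * w₄).im = 0) :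
    (∀ z : ℂ, z ^ 4 + (a₁ : ℂ) * z ^ 3 + (a₂ : ℂ) * z ^ 2 + (a₃ : ℂ) * z + (a₄ : ℂ) = 0 →
      z.re ≤ 0) ↔
    ((0 < a₁ ∧ 0 < a₂ ∧ 0 < a₃ ∧ 0 ≤ a₄ ∧ a₁ ^ 2 * a₄ + a₃ ^ 2 ≤ a₁ * a₂ * a₃) ∨
     (a₁ = 0 ∧ a₃ = 0 ∧ 0 < a₂ ∧ 0 < a₄ ∧ 2 * Real.sqrt a₄ < a₂)) := by
  set p : ℝ := -(w₁ + w₂).re with hpdef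
  set q : ℝ := (w₁ * w₂).re with hqdef
  set r : ℝ := -(w₃ + w₄).re with hrdef
  set s : ℝ := (w₃ * w₄).re with hsdef
  have hs12C : w₁ + w₂ = ((-p : ℝ) : ℂ) := by
    apply Complex.ext <;> simp [hpdef, hs12]
  have hp12C : w₁ * w₂ = ((q : ℝ) : ℂ) := by
    apply Complex.ext <;> simp [hqdef, hp12]
  have hs34C : w₃ + w₄ = ((-r : ℝ) : ℂ) := by
    apply Complex.ext <;> simp [hrdef, hs34]
  have hp34C : w₃ * w₄ = ((s : ℝ) : ℂ) := by
    apply Complex.ext <;> simp [hsdef, hp34]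
  have hfac2 : ∀ z : ℂ, z ^ 4 + (a₁ : ℂ) * z ^ 3 + (a₂ : ℂ) * z ^ 2 + (a₃ : ℂ) * z + (a₄ : ℂ)
      = (z ^ 2 + (p : ℂ) * z + (q : ℂ)) * (z ^ 2 + (r : ℂ) * z + (s : ℂ)) := by
    intro z
    rw [hfac z]
    push_cast at hs12C hp12C hs34C hp34C ⊢
    linear_combination (-z * (z ^ 2 - (w₃ + w₄) * z + w₃ * w₄)) * hs12C
      + (z ^ 2 - (w₃ + w₄) * z + w₃ * w₄) * hp12C
      + (-z * (z ^ 2 + (p : ℂ) * z + (q : ℂ))) * hs34C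
      + (z ^ 2 + (p : ℂ) * z + (q : ℂ)) * hp34C
  have h0 := hfac2 0
  have h1 := hfac2 1
  have hm1 := hfac2 (-1)
  have h2 := hfac2 2
  have ha4 : a₄ = q * s := by
    have : (a₄ : ℂ) = ((q * s : ℝ) : ℂ) := by push_cast; linear_combination h0
    exact_mod_cast this
  have ha3 : a₃ = p * s + q * r := by
    have : (a₃ : ℂ) = ((p * s + q * r : ℝ) : ℂ) := by
      push_cast
      linear_combination (-1/2 : ℂ) * h0 + h1 + (-1/3 : ℂ) * hm1 + (-1/6 : ℂ) * h2
    exact_mod_cast this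
  have ha2 : a₂ = q + s + p * r := by
    have : (a₂ : ℂ) = ((q + s + p * r : ℝ) : ℂ) := by
      push_cast
      linear_combination (-1 : ℂ) * h0 + (1/2 : ℂ) * h1 + (1/2 : ℂ) * hm1
    exact_mod_cast this
  have ha1 : a₁ = p + r := by
    have : (a₁ : ℂ) = ((p + r : ℝ) : ℂ) := by
      push_cast
      linear_combination (1/2 : ℂ) * h0 + (-1/2 : ℂ) * h1 + (-1/6 : ℂ) * hm1 + (1/6 : ℂ) * h2
    exact_mod_cast this
  have hzz : ∀ u v : ℂ, u + v = 0 → u * v = 0 → u = 0 ∧ v = 0 := by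
    intro u v hsum hprod
    rcases mul_eq_zero.1 hprod with h | h
    · exact ⟨h, by rw [h] at hsum; simpa using hsum⟩
    · exact ⟨by rw [h] at hsum; simpa using hsum, h⟩
  have hz12 : q = 0 → w₁ = 0 ∨ w₂ = 0 := by
    intro hq'
    apply mul_eq_zero.1
    rw [hp12C, hq']
    norm_num
  have hz34 : s = 0 → w₃ = 0 ∨ w₄ = 0 := by
    intro hs'
    apply mul_eq_zero.1
    rw [hp34C, hs']
    norm_num
  have hboth12 : ¬(p = 0 ∧ q = 0) := by
    rintro ⟨hp', hq'⟩
    have hsum : w₁ + w₂ = 0 := by rw [hs12C, hp']; norm_num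
    have hprod : w₁ * w₂ = 0 := by rw [hp12C, hq']; norm_num
    obtain ⟨e1, e2⟩ := hzz w₁ w₂ hsum hprod
    exact h12 (e1.trans e2.symm)
  have hboth34 : ¬(r = 0 ∧ s = 0) := by
    rintro ⟨hr', hs'⟩
    have hsum : w₃ + w₄ = 0 := by rw [hs34C, hr']; norm_num
    have hprod : w₃ * w₄ = 0 := by rw [hp34C, hs']; norm_num
    obtain ⟨e1, e2⟩ := hzz w₃ w₄ hsum hprod
    exact h34 (e1.trans e2.symm)
  constructor
  · -- forward direction
    intro h
    have hPw1 : w₁.re ≤ 0 := h w₁ (by rw [hfac]; ring)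
    have hPw2 : w₂.re ≤ 0 := h w₂ (by rw [hfac]; ring)
    have hPw3 : w₃.re ≤ 0 := h w₃ (by rw [hfac]; ring)
    have hPw4 : w₄.re ≤ 0 := h w₄ (by rw [hfac]; ring)
    obtain ⟨hp0, hq0⟩ := quad_nonneg p q w₁ w₂ hs12C hp12C hPw1 hPw2
    obtain ⟨hr0, hs0⟩ := quad_nonneg r s w₃ w₄ hs34C hp34C hPw3 hPw4
    rcases eq_or_lt_of_le (show (0:ℝ) ≤ a₁ by rw [ha1]; linarith) with ha1z | ha1pos
    · -- condition B
      right
      have hpz : p = 0 := by have := ha1; linarith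
      have hrz : r = 0 := by have := ha1; linarith
      have hqpos : 0 < q := by
        rcases lt_or_eq_of_le hq0 with h' | h'
        · exact h'
        · exact absurd ⟨hpz, h'.symm⟩ hboth12
      have hspos : 0 < s := by
        rcases lt_or_eq_of_le hs0 with h' | h'
        · exact h'
        · exact absurd ⟨hrz, h'.symm⟩ hboth34
      have hqs : q ≠ s := by
        intro he
        have c1 := hp12C
        have c2 := hp34C
        have e1 : w₂ = -w₁ := by
          have := hs12C; rw [hpz] at this; push_cast at this; linear_combination this
        have e2 : w₄ = -w₃ := by
          have := hs34C; rw [hrz] at this; push_cast at this; linear_combination this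
        rw [e1] at c1
        rw [e2] at c2
        have hcC : ((q : ℝ) : ℂ) = ((s : ℝ) : ℂ) := by exact_mod_cast he
        have e3 : (w₁ - w₃) * (w₁ + w₃) = 0 := by
          linear_combination (-1 : ℂ) * c1 + c2 - hcC
        rcases mul_eq_zero.1 e3 with h' | h'
        · exact h13 (by linear_combination h')
        · exact h23 (by rw [e1]; linear_combination -h')
      refine ⟨ha1z.symm, by rw [ha3, hpz, hrz]; ring, by rw [ha2, hpz, hrz]; nlinarith,
        by rw [ha4]; exact mul_pos hqpos hspos, ?_⟩
      have hsq : Real.sqrt a₄ = Real.sqrt q * Real.sqrt s := by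
        rw [ha4]; exact Real.sqrt_mul hq0 s
      have hne' : Real.sqrt q ≠ Real.sqrt s := by
        intro h'
        apply hqs
        rw [← Real.sq_sqrt hq0, ← Real.sq_sqrt hs0, h']
      have hpos : 0 < (Real.sqrt q - Real.sqrt s) ^ 2 :=
        lt_of_le_of_ne (sq_nonneg _) (Ne.symm (pow_ne_zero 2 (sub_ne_zero.2 hne')))
      rw [ha2, hpz, hrz, hsq]
      nlinarith [Real.sq_sqrt hq0, Real.sq_sqrt hs0]
    · -- condition A
      left
      have ha3nn : 0 ≤ a₃ := by
        rw [ha3]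
        have := mul_nonneg hp0 hs0
        have := mul_nonneg hq0 hr0
        linarith
      have ha3pos : 0 < a₃ := by
        rcases lt_or_eq_of_le ha3nn with h' | h'
        · exact h'
        · exfalso
          have hps : p * s = 0 := by
            have e := ha3
            linarith [mul_nonneg hp0 hs0, mul_nonneg hq0 hr0]
          have hqr : q * r = 0 := by
            have e := ha3
            linarith [mul_nonneg hp0 hs0, mul_nonneg hq0 hr0]
          rcases lt_or_ge 0 p with hpp | hpp
          · have hsz : s = 0 := by
              rcases mul_eq_zero.1 hps with h'' | h''
              · exact absurd h'' (ne_of_gt hpp)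
              · exact h''
            rcases mul_eq_zero.1 hqr with hqz | hrz
            · rcases hz12 hqz with e1 | e1 <;> rcases hz34 hsz with e2 | e2
              · exact h13 (e1.trans e2.symm)
              · exact h14 (e1.trans e2.symm)
              · exact h23 (e1.trans e2.symm)
              · exact h24 (e1.trans e2.symm)
            · exact hboth34 ⟨hrz, hsz⟩
          · have hpz' : p = 0 := le_antisymm hpp hp0
            have hrpos : 0 < r := by
              have := ha1; rw [this] at ha1pos; linarith
            have hqz : q = 0 := by
              rcases mul_eq_zero.1 hqr with h'' | h''
              · exact h''
              · exact absurd h'' (ne_of_gt hrpos)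
            exact hboth12 ⟨hpz', hqz⟩
      have ha2pos : 0 < a₂ := by
        have ha2nn : 0 ≤ a₂ := by
          rw [ha2]
          have := mul_nonneg hp0 hr0
          linarith
        rcases lt_or_eq_of_le ha2nn with h' | h'
        · exact h'
        · exfalso
          have hqz : q = 0 := by
            have e := ha2
            linarith [mul_nonneg hp0 hr0]
          have hsz : s = 0 := by
            have e := ha2
            linarith [mul_nonneg hp0 hr0]
          rcases hz12 hqz with e1 | e1 <;> rcases hz34 hsz with e2 | e2
          · exact h13 (e1.trans e2.symm)
          · exact h14 (e1.trans e2.symm)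
          · exact h23 (e1.trans e2.symm)
          · exact h24 (e1.trans e2.symm)
      refine ⟨ha1pos, ha2pos, ha3pos, by rw [ha4]; exact mul_nonneg hq0 hs0, ?_⟩
      have hid : a₁ * a₂ * a₃ - a₃ ^ 2 - a₁ ^ 2 * a₄
          = p * r * ((q - s) ^ 2 + (p + r) * (p * s + q * r)) := by
        rw [ha1, ha2, ha3, ha4]; ring
      linarith [hid, mul_nonneg (mul_nonneg hp0 hr0)
        (add_nonneg (sq_nonneg (q - s))
          (mul_nonneg (by linarith : (0:ℝ) ≤ p + r)
            (by rw [← ha3]; exact ha3nn : (0:ℝ) ≤ p * s + q * r)))]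
  · -- backward direction
    intro hAB z hz
    rw [hfac2 z] at hz
    suffices h : 0 ≤ p ∧ 0 ≤ q ∧ 0 ≤ r ∧ 0 ≤ s by
      obtain ⟨hp0, hq0, hr0, hs0⟩ := h
      rcases mul_eq_zero.1 hz with h' | h'
      · exact quad_root_re p q hp0 hq0 z h'
      · exact quad_root_re r s hr0 hs0 z h'
    rcases hAB with ⟨h1, h2, h3, h4, h5⟩ | ⟨h1, h3, h2, h4, h5⟩
    · -- A
      have hid : a₁ * a₂ * a₃ - a₃ ^ 2 - a₁ ^ 2 * a₄
          = p * r * ((q - s) ^ 2 + (p + r) * (p * s + q * r)) := by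
        rw [ha1, ha2, ha3, ha4]; ring
      have hB : 0 < (q - s) ^ 2 + (p + r) * (p * s + q * r) := by
        rw [← ha1, ← ha3]
        linarith [sq_nonneg (q - s), mul_pos h1 h3]
      have hpr : 0 ≤ p * r := by
        by_contra hc
        push_neg at hc
        linarith [hid, h5, mul_neg_of_neg_of_pos hc hB]
      have hp0 : 0 ≤ p := by
        by_contra hc
        push_neg at hc
        have hr' : 0 < r := by have := ha1; linarith
        linarith [mul_neg_of_neg_of_pos hc hr']
      have hr0 : 0 ≤ r := by
        by_contra hc
        push_neg at hc
        have hp' : 0 < p := by have := ha1; linarith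
        linarith [mul_neg_of_pos_of_neg hp' hc]
      have hq0 : 0 ≤ q := by
        by_contra hc
        push_neg at hc
        have hs' : s ≤ 0 := by
          by_contra hc2
          push_neg at hc2
          have := mul_neg_of_neg_of_pos hc hc2
          have := ha4
          linarith
        have e := ha3
        linarith [mul_nonneg hp0 (neg_nonneg.2 hs'), mul_nonneg hr0 (neg_nonneg.2 hc.le)]
      have hs0 : 0 ≤ s := by
        by_contra hc
        push_neg at hc
        have hq' : q ≤ 0 := by
          by_contra hc2
          push_neg at hc2
          have := mul_neg_of_pos_of_neg hc2 hc
          have := ha4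
          linarith
        have e := ha3
        linarith [mul_nonneg hp0 (neg_nonneg.2 hc.le), mul_nonneg hr0 (neg_nonneg.2 hq')]
      exact ⟨hp0, hq0, hr0, hs0⟩
    · -- B
      have hrp : r = -p := by have := ha1; rw [h1] at this; linarith
      have hps : p * (s - q) = 0 := by
        have e3 : (0 : ℝ) = p * s + q * r := by rw [← h3]; exact ha3
        rw [hrp] at e3
        linear_combination -e3
      rcases mul_eq_zero.1 hps with hpz | hsq
      · have hrz : r = 0 := by rw [hrp, hpz]; ring
        have e2 : a₂ = q + s := by rw [ha2, hpz, hrz]; ring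
        have e4 : a₄ = q * s := ha4
        have hqpos : 0 < q := by
          rcases lt_trichotomy q 0 with hc | hc | hc
          · have hsneg : s < 0 := by
              by_contra hc2
              push_neg at hc2
              have := mul_nonpos_of_nonpos_of_nonneg hc.le hc2
              linarith
            linarith
          · rw [hc] at e4; simp at e4; linarith
          · exact hc
        have hspos : 0 < s := by
          rcases lt_trichotomy s 0 with hc | hc | hc
          · have := mul_neg_of_pos_of_neg hqpos hc
            linarith
          · rw [hc] at e4; simp at e4; linarith
          · exact hc
        exact ⟨le_of_eq hpz.symm, hqpos.le, le_of_eq hrz.symm, hspos.le⟩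
      · exfalso
        have hsq' : s = q := by linarith
        have e4 : a₄ = q * q := by rw [ha4, hsq']
        have e2 : a₂ = 2 * q - p ^ 2 := by rw [ha2, hsq', hrp]; ring
        have habs : Real.sqrt a₄ = |q| := by rw [e4]; exact Real.sqrt_mul_self_eq_abs q
        rw [habs] at h5
        have := le_abs_self q
        have := sq_nonneg p
        linarith

lemma pair_im (u v : ℂ) (h : (starRingEnd ℂ) u = v ∨ ((starRingEnd ℂ) u = u ∧ (starRingEnd ℂ) v = v)) :
    (u + v).im = 0 ∧ (u * v).im = 0 := by
  rcases h with h | ⟨h1, h2⟩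
  · subst h
    constructor
    · simp [Complex.add_im]
    · simp [Complex.mul_im, Complex.conj_re, Complex.conj_im]
      ring
  · have hu : u.im = 0 := by
      have := congrArg Complex.im h1
      simp [Complex.conj_im] at this
      linarith
    have hv : v.im = 0 := by
      have := congrArg Complex.im h2
      simp [Complex.conj_im] at this
      linarith
    constructor
    · simp [Complex.add_im, hu, hv]
    · simp [Complex.mul_im, hu, hv]

/-- Bottema's conditions A and B: for a real quartic `λ⁴ + a₁λ³ + a₂λ² + a₃λ + a₄`
with four distinct complex roots, all roots have non-positive real part iff either
(A) `a₁ > 0, a₂ > 0, a₃ > 0, a₄ ≥ 0` and `a₁a₂a₃ ≥ a₁²a₄ + a₃²`, or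
(B) `a₁ = 0, a₃ = 0, a₂ > 0, a₄ > 0` and `a₂ > 2√a₄`. -/
theorem bottema_nonpositive_real_parts (a₁ a₂ a₃ a₄ : ℝ)
    (z₁ z₂ z₃ z₄ : ℂ)
    (hne : z₁ ≠ z₂ ∧ z₁ ≠ z₃ ∧ z₁ ≠ z₄ ∧ z₂ ≠ z₃ ∧ z₂ ≠ z₄ ∧ z₃ ≠ z₄)
    (hfac : ∀ z : ℂ, z ^ 4 + (a₁ : ℂ) * z ^ 3 + (a₂ : ℂ) * z ^ 2 + (a₃ : ℂ) * z + (a₄ : ℂ)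
      = (z - z₁) * (z - z₂) * (z - z₃) * (z - z₄)) :
    (∀ z : ℂ, z ^ 4 + (a₁ : ℂ) * z ^ 3 + (a₂ : ℂ) * z ^ 2 + (a₃ : ℂ) * z + (a₄ : ℂ) = 0 →
      z.re ≤ 0) ↔
    ((0 < a₁ ∧ 0 < a₂ ∧ 0 < a₃ ∧ 0 ≤ a₄ ∧ a₁ ^ 2 * a₄ + a₃ ^ 2 ≤ a₁ * a₂ * a₃) ∨
     (a₁ = 0 ∧ a₃ = 0 ∧ 0 < a₂ ∧ 0 < a₄ ∧ 2 * Real.sqrt a₄ < a₂)) := by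
  obtain ⟨h12, h13, h14, h23, h24, h34⟩ := hne
  have hroot : ∀ w : ℂ, (w ^ 4 + (a₁ : ℂ) * w ^ 3 + (a₂ : ℂ) * w ^ 2 + (a₃ : ℂ) * w + (a₄ : ℂ) = 0)
      ↔ (w = z₁ ∨ w = z₂ ∨ w = z₃ ∨ w = z₄) := by
    intro w
    rw [hfac w]
    simp [mul_eq_zero, sub_eq_zero]
    tauto
  have hconj : ∀ w : ℂ, (w ^ 4 + (a₁ : ℂ) * w ^ 3 + (a₂ : ℂ) * w ^ 2 + (a₃ : ℂ) * w + (a₄ : ℂ) = 0)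
      → ((starRingEnd ℂ) w = z₁ ∨ (starRingEnd ℂ) w = z₂ ∨ (starRingEnd ℂ) w = z₃ ∨ (starRingEnd ℂ) w = z₄) := by
    intro w hw
    apply (hroot _).1
    have := congrArg (starRingEnd ℂ) hw
    simpa [map_add, map_mul, map_pow, Complex.conj_ofReal] using this
  have hc1 := hconj z₁ ((hroot z₁).2 (Or.inl rfl))
  have hc2 := hconj z₂ ((hroot z₂).2 (Or.inr (Or.inl rfl)))
  have hc3 := hconj z₃ ((hroot z₃).2 (Or.inr (Or.inr (Or.inl rfl))))
  have hc4 := hconj z₄ ((hroot z₄).2 (Or.inr (Or.inr (Or.inr rfl))))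
  have hinv : ∀ u v : ℂ, (starRingEnd ℂ) u = v → (starRingEnd ℂ) v = u := by
    intro u v h
    rw [← h, Complex.conj_conj]
  rcases hc1 with e1 | e1 | e1 | e1
  · -- z₁ real
    rcases hc2 with e2 | e2 | e2 | e2
    · exact absurd (e1.symm.trans (hinv _ _ e2)) h12
    · -- z₂ real
      rcases hc3 with e3 | e3 | e3 | e3
      · exact absurd (e1.symm.trans (hinv _ _ e3)) h13
      · exact absurd (e2.symm.trans (hinv _ _ e3)) h23
      · rcases hc4 with f | f | f | f
        · exact absurd (e1.symm.trans (hinv _ _ f)) h14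
        · exact absurd (e2.symm.trans (hinv _ _ f)) h24
        · exact absurd (e3.symm.trans (hinv _ _ f)) h34
        · exact bottema_key a₁ a₂ a₃ a₄ z₁ z₂ z₃ z₄ h12 h13 h14 h23 h24 h34 hfac
            (pair_im _ _ (Or.inr ⟨e1, e2⟩)).1 (pair_im _ _ (Or.inr ⟨e1, e2⟩)).2
            (pair_im _ _ (Or.inr ⟨e3, f⟩)).1 (pair_im _ _ (Or.inr ⟨e3, f⟩)).2
      · exact bottema_key a₁ a₂ a₃ a₄ z₁ z₂ z₃ z₄ h12 h13 h14 h23 h24 h34 hfac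
          (pair_im _ _ (Or.inr ⟨e1, e2⟩)).1 (pair_im _ _ (Or.inr ⟨e1, e2⟩)).2
          (pair_im _ _ (Or.inl e3)).1 (pair_im _ _ (Or.inl e3)).2
    · -- conj z₂ = z₃, pairs (2,3),(1,4)
      rcases hc4 with f | f | f | f
      · exact absurd (e1.symm.trans (hinv _ _ f)) h14
      · exact absurd (e2.symm.trans (hinv _ _ f)) h34
      · exact absurd ((hinv _ _ e2).symm.trans (hinv _ _ f)) h24
      · exact bottema_key a₁ a₂ a₃ a₄ z₂ z₃ z₁ z₄ h23 h12.symm h24 h13.symm h34 h14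
          (fun z => by rw [hfac z]; ring)
          (pair_im _ _ (Or.inl e2)).1 (pair_im _ _ (Or.inl e2)).2
          (pair_im _ _ (Or.inr ⟨e1, f⟩)).1 (pair_im _ _ (Or.inr ⟨e1, f⟩)).2
    · -- conj z₂ = z₄, pairs (2,4),(1,3)
      rcases hc3 with f | f | f | f
      · exact absurd (e1.symm.trans (hinv _ _ f)) h13
      · exact absurd (e2.symm.trans (hinv _ _ f)) h34.symm
      · exact bottema_key a₁ a₂ a₃ a₄ z₂ z₄ z₁ z₃ h24 h12.symm h23 h14.symm h34.symm h13
          (fun z => by rw [hfac z]; ring)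
          (pair_im _ _ (Or.inl e2)).1 (pair_im _ _ (Or.inl e2)).2
          (pair_im _ _ (Or.inr ⟨e1, f⟩)).1 (pair_im _ _ (Or.inr ⟨e1, f⟩)).2
      · exact absurd ((hinv _ _ e2).symm.trans (hinv _ _ f)) h23
  · -- conj z₁ = z₂
    have e1' := hinv _ _ e1
    rcases hc3 with e3 | e3 | e3 | e3
    · exact absurd (e1.symm.trans (hinv _ _ e3)) h23
    · exact absurd (e1'.symm.trans (hinv _ _ e3)) h13
    · rcases hc4 with f | f | f | f
      · exact absurd (e1.symm.trans (hinv _ _ f)) h24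
      · exact absurd (e1'.symm.trans (hinv _ _ f)) h14
      · exact absurd (e3.symm.trans (hinv _ _ f)) h34
      · exact bottema_key a₁ a₂ a₃ a₄ z₁ z₂ z₃ z₄ h12 h13 h14 h23 h24 h34 hfac
          (pair_im _ _ (Or.inl e1)).1 (pair_im _ _ (Or.inl e1)).2
          (pair_im _ _ (Or.inr ⟨e3, f⟩)).1 (pair_im _ _ (Or.inr ⟨e3, f⟩)).2
    · exact bottema_key a₁ a₂ a₃ a₄ z₁ z₂ z₃ z₄ h12 h13 h14 h23 h24 h34 hfac
        (pair_im _ _ (Or.inl e1)).1 (pair_im _ _ (Or.inl e1)).2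
        (pair_im _ _ (Or.inl e3)).1 (pair_im _ _ (Or.inl e3)).2
  · -- conj z₁ = z₃, pairs (1,3),(2,4)
    have e1' := hinv _ _ e1
    rcases hc2 with e2 | e2 | e2 | e2
    · exact absurd (e1.symm.trans (hinv _ _ e2)) h23.symm
    · rcases hc4 with f | f | f | f
      · exact absurd (e1.symm.trans (hinv _ _ f)) h34
      · exact absurd (e2.symm.trans (hinv _ _ f)) h24
      · exact absurd (e1'.symm.trans (hinv _ _ f)) h14
      · exact bottema_key a₁ a₂ a₃ a₄ z₁ z₃ z₂ z₄ h13 h12 h14 h23.symm h34 h24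
          (fun z => by rw [hfac z]; ring)
          (pair_im _ _ (Or.inl e1)).1 (pair_im _ _ (Or.inl e1)).2
          (pair_im _ _ (Or.inr ⟨e2, f⟩)).1 (pair_im _ _ (Or.inr ⟨e2, f⟩)).2
    · exact absurd (e1'.symm.trans (hinv _ _ e2)) h12
    · exact bottema_key a₁ a₂ a₃ a₄ z₁ z₃ z₂ z₄ h13 h12 h14 h23.symm h34 h24
        (fun z => by rw [hfac z]; ring)
        (pair_im _ _ (Or.inl e1)).1 (pair_im _ _ (Or.inl e1)).2
        (pair_im _ _ (Or.inl e2)).1 (pair_im _ _ (Or.inl e2)).2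
  · -- conj z₁ = z₄, pairs (1,4),(2,3)
    have e1' := hinv _ _ e1
    rcases hc2 with e2 | e2 | e2 | e2
    · exact absurd (e1.symm.trans (hinv _ _ e2)) h24.symm
    · rcases hc3 with f | f | f | f
      · exact absurd (e1.symm.trans (hinv _ _ f)) h34.symm
      · exact absurd (e2.symm.trans (hinv _ _ f)) h23
      · exact bottema_key a₁ a₂ a₃ a₄ z₁ z₄ z₂ z₃ h14 h12 h13 h24.symm h34.symm h23
          (fun z => by rw [hfac z]; ring)
          (pair_im _ _ (Or.inl e1)).1 (pair_im _ _ (Or.inl e1)).2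
          (pair_im _ _ (Or.inr ⟨e2, f⟩)).1 (pair_im _ _ (Or.inr ⟨e2, f⟩)).2
      · exact absurd (e1'.symm.trans (hinv _ _ f)) h13
    · exact bottema_key a₁ a₂ a₃ a₄ z₁ z₄ z₂ z₃ h14 h12 h13 h24.symm h34.symm h23
        (fun z => by rw [hfac z]; ring)
        (pair_im _ _ (Or.inl e1)).1 (pair_im _ _ (Or.inl e1)).2
        (pair_im _ _ (Or.inl e2)).1 (pair_im _ _ (Or.inl e2)).2
    · exact absurd (e1'.symm.trans (hinv _ _ e2)) h12
end

section
/- Let y₁, y₂, y₃, w be real numbers with w² = y₃²/4 + y₁y₂, and define a₁ = y₃/2 + w, a₂ = 2 + y₂, a₃ = −y₃/2 + w. Then a₁a₂a₃ − a₁² − a₃² = y₁y₂² − y₃². In particular, (a₁, a₂, a₃) lies on Bottema's ruled surface a₁a₂a₃ = a₁² + a₃² if and only if (y₁, y₂, y₃) lies on the Whitney umbrella y₁y₂² = y₃². -/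
def bottemaPoly {R : Type*} [CommRing R] (a₁ a₂ a₃ : R) : R := a₁ * a₂ * a₃ - a₁ ^ 2 - a₃ ^ 2

def whitneyPoly {R : Type*} [CommRing R] (y₁ y₂ y₃ : R) : R := y₁ * y₂ ^ 2 - y₃ ^ 2

/-- With `a₁ = w + u`, `a₃ = w - u` one has `a₁a₃ = w² - u² = y₁y₂`, so the difference of the
two sides is `y₂ (w² - u² - y₁y₂)`. Writing `y₃ = 2u` keeps the identity division-free. -/
theorem bottemaPoly_eq_whitneyPoly {R : Type*} [CommRing R] {y₁ y₂ u w : R}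
    (hw : w ^ 2 = u ^ 2 + y₁ * y₂) :
    bottemaPoly (u + w) (2 + y₂) (-u + w) = whitneyPoly y₁ y₂ (2 * u) := by
  unfold bottemaPoly whitneyPoly
  linear_combination y₂ * hw

theorem bottemaPoly_eq_zero_iff {R : Type*} [CommRing R] (a₁ a₂ a₃ : R) :
    bottemaPoly a₁ a₂ a₃ = 0 ↔ a₁ * a₂ * a₃ = a₁ ^ 2 + a₃ ^ 2 := by
  rw [bottemaPoly, sub_sub, sub_eq_zero]

theorem whitneyPoly_eq_zero_iff {R : Type*} [CommRing R] (y₁ y₂ y₃ : R) :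
    whitneyPoly y₁ y₂ y₃ = 0 ↔ y₁ * y₂ ^ 2 = y₃ ^ 2 :=
  sub_eq_zero

/-- The map `a₁ = y₃/2 + w`, `a₂ = 2 + y₂`, `a₃ = −y₃/2 + w` with `w² = y₃²/4 + y₁y₂`
satisfies `a₁a₂a₃ − a₁² − a₃² = y₁y₂² − y₃²`; hence `(a₁,a₂,a₃)` lies on Bottema's
ruled surface `a₁a₂a₃ = a₁² + a₃²` iff `(y₁,y₂,y₃)` lies on the Whitney umbrella
`y₁y₂² = y₃²`. -/
theorem bottema_surface_is_whitney_umbrella (y₁ y₂ y₃ w a₁ a₂ a₃ : ℝ)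
    (hw : w ^ 2 = y₃ ^ 2 / 4 + y₁ * y₂)
    (h₁ : a₁ = y₃ / 2 + w) (h₂ : a₂ = 2 + y₂) (h₃ : a₃ = -y₃ / 2 + w) :
    a₁ * a₂ * a₃ - a₁ ^ 2 - a₃ ^ 2 = y₁ * y₂ ^ 2 - y₃ ^ 2 ∧
    (a₁ * a₂ * a₃ = a₁ ^ 2 + a₃ ^ 2 ↔ y₁ * y₂ ^ 2 = y₃ ^ 2) := by
  have key : bottemaPoly a₁ a₂ a₃ = whitneyPoly y₁ y₂ y₃ := by
    have h := bottemaPoly_eq_whitneyPoly (y₁ := y₁) (y₂ := y₂) (u := y₃ / 2) (w := w)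
      (by rw [hw]; ring)
    rwa [mul_div_cancel₀ y₃ two_ne_zero, ← neg_div, ← h₁, ← h₂, ← h₃] at h
  refine ⟨key, ?_⟩
  rw [← bottemaPoly_eq_zero_iff, ← whitneyPoly_eq_zero_iff, key]
end

section
/- Let k₁₁ > 0, k₂₂ > 0 and let d₁₁, d₁₂, d₂₂ be real numbers with d₁₁ + d₂₂ > 0, and let ν be real. Define the Routh–Hurwitz coefficients a₁ = d₁₁ + d₂₂, a₂ = k₁₁ + k₂₂ + d₁₁d₂₂ − d₁₂², a₃ = k₁₁d₂₂ + k₂₂d₁₁, a₄ = k₁₁k₂₂ + ν². Then a₁²a₄ + a₃² − a₁a₂a₃ < 0 if and only if ν² < (k₁₁ − k₂₂)²/4 − [(d₁₁ − d₂₂)²(k₁₁ − k₂₂)² − 4(k₁₁d₂₂ + k₂₂d₁₁)(d₁₁d₂₂ − d₁₂²)(d₁₁ + d₂₂)]/(4(d₁₁ + d₂₂)²). -/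
/-!
With `a₁ = d₁₁ + d₂₂` and `a₃ = k₁₁d₂₂ + k₂₂d₁₁` one has
`(a₃ - a₁k₁₁)(a₃ - a₁k₂₂) = -d₁₁d₂₂(k₁₁ - k₂₂)²`, so the Hurwitz quantity collapses to
`H = a₁²ν² - (d₁₁d₂₂(k₁₁ - k₂₂)² + a₁a₃(d₁₁d₂₂ - d₁₂²))`. The right-hand side of the
criterion is the same bracket divided by `a₁²`, because `a₁² - (d₁₁ - d₂₂)² = 4d₁₁d₂₂`.
-/

lemma hurwitz_quantity_eq_s9 {R : Type*} [CommRing R] (k₁₁ k₂₂ d₁₁ d₁₂ d₂₂ ν : R) :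
    (d₁₁ + d₂₂) ^ 2 * (k₁₁ * k₂₂ + ν ^ 2) + (k₁₁ * d₂₂ + k₂₂ * d₁₁) ^ 2
      - (d₁₁ + d₂₂) * (k₁₁ + k₂₂ + d₁₁ * d₂₂ - d₁₂ ^ 2) * (k₁₁ * d₂₂ + k₂₂ * d₁₁) =
    (d₁₁ + d₂₂) ^ 2 * ν ^ 2 - (d₁₁ * d₂₂ * (k₁₁ - k₂₂) ^ 2
      + (d₁₁ + d₂₂) * (k₁₁ * d₂₂ + k₂₂ * d₁₁) * (d₁₁ * d₂₂ - d₁₂ ^ 2)) := by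
  ring

lemma bottema_bound_eq {K : Type*} [Field K] [CharZero K] (k₁₁ k₂₂ d₁₁ d₁₂ d₂₂ : K)
    (hd : d₁₁ + d₂₂ ≠ 0) :
    (k₁₁ - k₂₂) ^ 2 / 4
      - ((d₁₁ - d₂₂) ^ 2 * (k₁₁ - k₂₂) ^ 2
          - 4 * (k₁₁ * d₂₂ + k₂₂ * d₁₁) * (d₁₁ * d₂₂ - d₁₂ ^ 2) * (d₁₁ + d₂₂))
        / (4 * (d₁₁ + d₂₂) ^ 2) =
    (d₁₁ * d₂₂ * (k₁₁ - k₂₂) ^ 2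
      + (d₁₁ + d₂₂) * (k₁₁ * d₂₂ + k₂₂ * d₁₁) * (d₁₁ * d₂₂ - d₁₂ ^ 2)) / (d₁₁ + d₂₂) ^ 2 := by
  field_simp
  ring

theorem bottema_damped_stability_condition_general (k₁₁ k₂₂ d₁₁ d₁₂ d₂₂ ν : ℝ)
    (hd : 0 < d₁₁ + d₂₂) :
    (d₁₁ + d₂₂) ^ 2 * (k₁₁ * k₂₂ + ν ^ 2) + (k₁₁ * d₂₂ + k₂₂ * d₁₁) ^ 2
      - (d₁₁ + d₂₂) * (k₁₁ + k₂₂ + d₁₁ * d₂₂ - d₁₂ ^ 2) * (k₁₁ * d₂₂ + k₂₂ * d₁₁) < 0 ↔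
    ν ^ 2 < (k₁₁ - k₂₂) ^ 2 / 4
      - ((d₁₁ - d₂₂) ^ 2 * (k₁₁ - k₂₂) ^ 2
          - 4 * (k₁₁ * d₂₂ + k₂₂ * d₁₁) * (d₁₁ * d₂₂ - d₁₂ ^ 2) * (d₁₁ + d₂₂))
        / (4 * (d₁₁ + d₂₂) ^ 2) := by
  rw [hurwitz_quantity_eq_s9, bottema_bound_eq _ _ _ _ _ hd.ne', sub_neg,
    lt_div_iff₀ (pow_pos hd 2), mul_comm]

/-- Bottema's stability condition for the two-degrees-of-freedom circulatory system
with damping: with `a₁ = d₁₁ + d₂₂`, `a₂ = k₁₁ + k₂₂ + d₁₁d₂₂ − d₁₂²`,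
`a₃ = k₁₁d₂₂ + k₂₂d₁₁`, `a₄ = k₁₁k₂₂ + ν²`, the Routh–Hurwitz quantity
`H = a₁²a₄ + a₃² − a₁a₂a₃` is negative iff
`ν² < (k₁₁ − k₂₂)²/4 − [(d₁₁ − d₂₂)²(k₁₁ − k₂₂)² − 4(k₁₁d₂₂ + k₂₂d₁₁)(d₁₁d₂₂ − d₁₂²)(d₁₁ + d₂₂)]/(4(d₁₁ + d₂₂)²)`. -/
theorem bottema_damped_stability_condition (k₁₁ k₂₂ d₁₁ d₁₂ d₂₂ ν : ℝ)
    (hk₁₁ : 0 < k₁₁) (hk₂₂ : 0 < k₂₂) (hd : 0 < d₁₁ + d₂₂) :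
    (d₁₁ + d₂₂) ^ 2 * (k₁₁ * k₂₂ + ν ^ 2) + (k₁₁ * d₂₂ + k₂₂ * d₁₁) ^ 2
      - (d₁₁ + d₂₂) * (k₁₁ + k₂₂ + d₁₁ * d₂₂ - d₁₂ ^ 2) * (k₁₁ * d₂₂ + k₂₂ * d₁₁) < 0 ↔
    ν ^ 2 < (k₁₁ - k₂₂) ^ 2 / 4
      - ((d₁₁ - d₂₂) ^ 2 * (k₁₁ - k₂₂) ^ 2
          - 4 * (k₁₁ * d₂₂ + k₂₂ * d₁₁) * (d₁₁ * d₂₂ - d₁₂ ^ 2) * (d₁₁ + d₂₂))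
        / (4 * (d₁₁ + d₂₂) ^ 2) :=
  bottema_damped_stability_condition_general k₁₁ k₂₂ d₁₁ d₁₂ d₂₂ ν hd
end

section
/- Let k₁₁ > 0 and k₂₂ > 0 be real numbers and ν real. All complex roots of the polynomial λ⁴ + (k₁₁ + k₂₂)λ² + (k₁₁k₂₂ + ν²) are simple and purely imaginary if and only if 4ν² < (k₁₁ − k₂₂)². -/
/-!
Substituting `w = z²` turns `z⁴ + a z² + b` into the quadratic `w² + a w + b`, whose roots are
`w = (-a ± √(a² - 4b)) / 2`. A root `z` is purely imaginary exactly when `z²` is a nonpositive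
real, and (as `b ≠ 0` forces `z ≠ 0`) it is simple exactly when `2 z² + a ≠ 0`. When
`a² > 4b` both roots `w` are distinct negative reals. When `a² ≤ 4b` the root
`w = (-a + i √(4b - a²)) / 2` is either non-real or equal to `-a/2`, a double root.
Finally `(k₁₁ + k₂₂)² - 4 (k₁₁ k₂₂ + ν²) = (k₁₁ - k₂₂)² - 4 ν²`.
-/

open Polynomial Complex

namespace Polynomial

theorem rootMultiplicity_eq_one_iff_not_isRoot_derivative {R : Type*} [CommRing R]
    {p : R[X]} {t : R} (hp : p ≠ 0) (ht : p.IsRoot t) :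
    p.rootMultiplicity t = 1 ↔ ¬ (derivative p).IsRoot t := by
  have hpos := (rootMultiplicity_pos hp).2 ht
  have hmult := one_lt_rootMultiplicity_iff_isRoot hp (t := t)
  constructor
  · intro h1 hd
    have := hmult.2 ⟨ht, hd⟩
    omega
  · intro hd
    by_contra hne
    exact hd (hmult.1 (by omega)).2

section Biquadratic

variable {R : Type*} [CommRing R]

noncomputable def biquadratic (a b : R) : R[X] := X ^ 4 + C a * X ^ 2 + C b

theorem isRoot_biquadratic_iff {a b z : R} :
    (biquadratic a b).IsRoot z ↔ (z ^ 2) ^ 2 + a * z ^ 2 + b = 0 := by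
  simp only [biquadratic, IsRoot, eval_add, eval_mul, eval_pow, eval_C, eval_X, ← pow_mul]

theorem biquadratic_ne_zero [Nontrivial R] (a b : R) : biquadratic a b ≠ 0 := by
  intro h
  simpa [biquadratic, coeff_X_pow, coeff_C] using congrArg (coeff · 4) h

theorem eval_derivative_biquadratic (a b z : R) :
    (derivative (biquadratic a b)).eval z = 2 * z * (2 * z ^ 2 + a) := by
  simp only [biquadratic, derivative_add, derivative_C_mul, derivative_X_pow, derivative_C,
    eval_add, eval_mul, eval_pow, eval_C, eval_X, eval_zero]
  push_cast
  ring

theorem rootMultiplicity_biquadratic_eq_one_iff [IsDomain R] [NeZero (2 : R)] {a b z : R}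
    (hb : b ≠ 0) (hz : (biquadratic a b).IsRoot z) :
    (biquadratic a b).rootMultiplicity z = 1 ↔ 2 * z ^ 2 + a ≠ 0 := by
  have hz0 : z ≠ 0 := by
    rintro rfl
    exact hb (by simpa using isRoot_biquadratic_iff.1 hz)
  rw [rootMultiplicity_eq_one_iff_not_isRoot_derivative (biquadratic_ne_zero a b) hz, IsRoot,
    eval_derivative_biquadratic, mul_eq_zero, not_or]
  simp [hz0, NeZero.ne (2 : R)]

end Biquadratic

end Polynomial

theorem Complex.re_eq_zero_iff_sq (z : ℂ) : z.re = 0 ↔ (z ^ 2).im = 0 ∧ (z ^ 2).re ≤ 0 := by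
  rw [sq, mul_re, mul_im]
  constructor
  · intro h
    simp only [h]
    constructor <;> nlinarith
  · rintro ⟨him, hre⟩
    by_contra h
    have : z.im = 0 := by
      rcases mul_eq_zero.1 (show z.re * z.im = 0 by linarith) with h' | h'
      exacts [absurd h' h, h']
    rw [this] at hre
    exact h (by nlinarith)

theorem forall_roots_biquadratic_iff {a b : ℂ} (hb : b ≠ 0) :
    (∀ z, (biquadratic a b).IsRoot z →
        z.re = 0 ∧ (biquadratic a b).rootMultiplicity z = 1) ↔
      ∀ w : ℂ, w ^ 2 + a * w + b = 0 → (w.im = 0 ∧ w.re ≤ 0) ∧ 2 * w + a ≠ 0 := by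
  constructor
  · intro h w hw
    obtain ⟨z, rfl⟩ := IsAlgClosed.exists_pow_nat_eq w two_pos
    have hz : (biquadratic a b).IsRoot z := isRoot_biquadratic_iff.2 hw
    obtain ⟨hre, hsimple⟩ := h z hz
    exact ⟨(re_eq_zero_iff_sq z).1 hre,
      (rootMultiplicity_biquadratic_eq_one_iff hb hz).1 hsimple⟩
  · intro h z hz
    obtain ⟨hreal, hsimple⟩ := h (z ^ 2) (isRoot_biquadratic_iff.1 hz)
    exact ⟨(re_eq_zero_iff_sq z).2 hreal,
      (rootMultiplicity_biquadratic_eq_one_iff hb hz).2 hsimple⟩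

theorem forall_roots_quadratic_real_nonpos_simple_iff {a b : ℝ} (ha : 0 ≤ a) (hb : 0 ≤ b) :
    (∀ w : ℂ, w ^ 2 + a * w + b = 0 → (w.im = 0 ∧ w.re ≤ 0) ∧ 2 * w + a ≠ 0) ↔
      4 * b < a ^ 2 := by
  constructor
  · intro h
    by_contra! hdisc
    set s := √(4 * b - a ^ 2)
    have hs : (s : ℂ) ^ 2 = 4 * b - a ^ 2 := by
      rw [← ofReal_pow, Real.sq_sqrt (by linarith)]
      push_cast
      ring
    obtain ⟨⟨him, -⟩, hsimple⟩ := h ((-a + s * I) / 2)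
      (by linear_combination (s ^ 2 / 4 : ℂ) * I_sq - hs / 4)
    have hs0 : s = 0 := by simpa using him
    exact hsimple (by rw [hs0]; push_cast; ring)
  · intro hdisc w hw
    set d := √(a ^ 2 - 4 * b)
    have hd : (d : ℂ) ^ 2 = a ^ 2 - 4 * b := by
      rw [← ofReal_pow, Real.sq_sqrt (by linarith)]
      push_cast
      ring
    obtain ⟨e, he, hesq⟩ : ∃ e : ℝ, 2 * w + a = e ∧ e ^ 2 = a ^ 2 - 4 * b := by
      rcases sq_eq_sq_iff_eq_or_eq_neg.1 (show (2 * w + a) ^ 2 = (d : ℂ) ^ 2 by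
        linear_combination 4 * hw - hd) with h | h
      · exact ⟨d, h, Real.sq_sqrt (by linarith)⟩
      · exact ⟨-d, by simpa using h, by rw [neg_sq, Real.sq_sqrt (by linarith)]⟩
    have hw' : w = ((e - a) / 2 : ℝ) := by
      push_cast
      linear_combination he / 2
    refine ⟨⟨by simp [hw'], ?_⟩, ?_⟩
    · rw [hw', ofReal_re]
      nlinarith
    · rw [he, Ne, ofReal_eq_zero]
      rintro rfl
      linarith

/-- Marginal stability of the undamped circulatory system: all complex roots of
`λ⁴ + (k₁₁ + k₂₂)λ² + (k₁₁k₂₂ + ν²)` are simple and purely imaginary iff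
`4ν² < (k₁₁ − k₂₂)²`. -/
theorem undamped_circulatory_marginal_stability (k₁₁ k₂₂ ν : ℝ)
    (hk₁₁ : 0 < k₁₁) (hk₂₂ : 0 < k₂₂) :
    (∀ z : ℂ, (X ^ 4 + C ((k₁₁ + k₂₂ : ℝ) : ℂ) * X ^ 2
        + C ((k₁₁ * k₂₂ + ν ^ 2 : ℝ) : ℂ)).IsRoot z →
      z.re = 0 ∧ (X ^ 4 + C ((k₁₁ + k₂₂ : ℝ) : ℂ) * X ^ 2
        + C ((k₁₁ * k₂₂ + ν ^ 2 : ℝ) : ℂ)).rootMultiplicity z = 1) ↔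
    4 * ν ^ 2 < (k₁₁ - k₂₂) ^ 2 := by
  have hb : 0 < k₁₁ * k₂₂ + ν ^ 2 := by positivity
  change (∀ z : ℂ, (biquadratic _ _).IsRoot z →
    z.re = 0 ∧ (biquadratic _ _).rootMultiplicity z = 1) ↔ _
  rw [forall_roots_biquadratic_iff (ofReal_ne_zero.2 hb.ne'),
    forall_roots_quadratic_real_nonpos_simple_iff (by positivity) hb.le]
  constructor <;> intro h <;> linarith
end

section
/- Let μ, Ω, b, σ be real numbers with μ ≠ 0. The purely imaginary number λ = iσ is a root of the viscous characteristic polynomial (λ² + 10μλ + 4b − 2Ω²)² + 4Ω²λ² if and only if σ = 0 and Ω² = 2b. In particular, for any nonzero viscosity μ the marginal stability condition is Ω² = 2b, independently of the magnitude of μ. -/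
/-!
At `λ = iσ` the term `4Ω²λ² = -(2Ωσ)²` is minus a real square, so a root satisfies
`(λ² + 10μλ + 4b − 2Ω²)² = (2Ωσ)²`; hence `λ² + 10μλ + 4b − 2Ω² = ±2Ωσ` is real. Its
imaginary part is `10μσ`, so `σ = 0` once `μ ≠ 0`, and the polynomial reduces to `(4b − 2Ω²)²`.
-/

open Complex

theorem Complex.im_eq_zero_of_sq_eq_ofReal_sq {z : ℂ} {r : ℝ} (h : z ^ 2 = (r : ℂ) ^ 2) :
    z.im = 0 := by
  rcases sq_eq_sq_iff_eq_or_eq_neg.mp h with rfl | rfl <;> simp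

/-- Marginal stability of the viscous Maclaurin spheroid: for `μ ≠ 0`, the purely
imaginary number `λ = iσ` is a root of `(λ² + 10μλ + 4b − 2Ω²)² + 4Ω²λ²` iff
`σ = 0` and `Ω² = 2b`; the marginal stability condition `Ω² = 2b` is independent
of the magnitude of the viscosity `μ`. -/
theorem maclaurin_viscous_marginal_stability (μ Ω b σ : ℝ) (hμ : μ ≠ 0) :
    ((Complex.I * σ) ^ 2 + 10 * (μ : ℂ) * (Complex.I * σ) + 4 * (b : ℂ)
        - 2 * (Ω : ℂ) ^ 2) ^ 2 + 4 * (Ω : ℂ) ^ 2 * (Complex.I * σ) ^ 2 = 0 ↔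
    σ = 0 ∧ Ω ^ 2 = 2 * b := by
  constructor
  · intro hroot
    have hsq : ((Complex.I * σ) ^ 2 + 10 * (μ : ℂ) * (Complex.I * σ) + 4 * (b : ℂ)
        - 2 * (Ω : ℂ) ^ 2) ^ 2 = ((2 * Ω * σ : ℝ) : ℂ) ^ 2 := by
      push_cast
      linear_combination hroot - 4 * (Ω : ℂ) ^ 2 * (σ : ℂ) ^ 2 * I_sq
    have hμσ : 10 * μ * σ = 0 := by
      simpa [sq] using Complex.im_eq_zero_of_sq_eq_ofReal_sq hsq
    obtain rfl : σ = 0 := by simpa [hμ] using hμσ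
    have hb : ((4 * b - 2 * Ω ^ 2 : ℝ) : ℂ) = 0 := by simpa using hroot
    exact ⟨rfl, by linarith [Complex.ofReal_eq_zero.mp hb]⟩
  · rintro ⟨rfl, hΩ⟩
    have hΩ' : (Ω : ℂ) ^ 2 = 2 * b := by exact_mod_cast hΩ
    push_cast
    linear_combination -2 * (4 * (b : ℂ) - 2 * (Ω : ℂ) ^ 2) * hΩ'
end

section
/- Let a > 0, c > 0 and ρ > 0 be real numbers and set L = (4πρ/15)·a²c·(a² − c²). Then the two conditions L < 0 and 1 + (32πρ/15)·(c a⁴)/L < 0 hold simultaneously if and only if a < c < 3a. Equivalently, the eigenvalues λ₂^± = −1/2 ± (1/2)√(1 + (32πρ/15)(c a⁴)/L) of Sobolev's reduced top are non-real precisely when a < c < 3a, reproducing Greenhill's instability zone. -/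
open Real

/-!
Writing `L = q·c(a² − c²)` with `q = (4πρ/15)a² > 0`, the numerator of the fraction is
`8q·c a²`, so once `L < 0` the second condition reads `0 < L + 8q·c a² = q·c(9a² − c²)`.
The zone is therefore `c(c² − a²) > 0` and `c(9a² − c²) > 0`; the two together force `c > 0`,
after which they say `a² < c² < 9a²`.
-/

theorem one_add_div_neg_iff_of_neg {L N : ℝ} (hL : L < 0) : 1 + N / L < 0 ↔ 0 < L + N := by
  rw [← lt_neg_iff_add_neg', div_lt_iff_of_neg hL]
  constructor <;> intro h <;> linarith

theorem pos_and_pos_iff_lt_and_lt_three_mul {a c : ℝ} (ha : 0 < a) :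
    0 < c * (c ^ 2 - a ^ 2) ∧ 0 < c * (9 * a ^ 2 - c ^ 2) ↔ a < c ∧ c < 3 * a := by
  constructor
  · rintro ⟨hlow, hhigh⟩
    have hc : 0 < c := by nlinarith
    rw [mul_pos_iff_of_pos_left hc, sub_pos] at hlow hhigh
    exact ⟨lt_of_pow_lt_pow_left₀ 2 hc.le hlow,
      lt_of_pow_lt_pow_left₀ 2 (by positivity) (by linarith)⟩
  · rintro ⟨hac, hc3a⟩
    have hc : 0 < c := ha.trans hac
    rw [mul_pos_iff_of_pos_left hc, mul_pos_iff_of_pos_left hc, sub_pos, sub_pos]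
    exact ⟨pow_lt_pow_left₀ hac ha.le two_ne_zero,
      by nlinarith [pow_lt_pow_left₀ hc3a hc.le two_ne_zero]⟩

theorem greenhill_instability_zone_general (a c ρ : ℝ) (ha : 0 < a) (hρ : 0 < ρ) :
    ((4 * π * ρ / 15) * a ^ 2 * c * (a ^ 2 - c ^ 2) < 0 ∧
      1 + (32 * π * ρ / 15) * (c * a ^ 4) / ((4 * π * ρ / 15) * a ^ 2 * c * (a ^ 2 - c ^ 2))
        < 0) ↔
    (a < c ∧ c < 3 * a) := by
  have hq : 0 < 4 * π * ρ / 15 * a ^ 2 := by positivity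
  have hL : -((4 * π * ρ / 15) * a ^ 2 * c * (a ^ 2 - c ^ 2))
      = (4 * π * ρ / 15 * a ^ 2) * (c * (c ^ 2 - a ^ 2)) := by ring
  have hLN : (4 * π * ρ / 15) * a ^ 2 * c * (a ^ 2 - c ^ 2) + (32 * π * ρ / 15) * (c * a ^ 4)
      = (4 * π * ρ / 15 * a ^ 2) * (c * (9 * a ^ 2 - c ^ 2)) := by ring
  rw [and_congr_right one_add_div_neg_iff_of_neg, ← neg_pos, hL, hLN,
    mul_pos_iff_of_pos_left hq, mul_pos_iff_of_pos_left hq]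
  exact pos_and_pos_iff_lt_and_lt_three_mul ha

/-- Greenhill's instability zone via Sobolev's reduced top: for `a, c, ρ > 0` and
`L = (4πρ/15)a²c(a² − c²)`, the conditions `L < 0` and
`1 + (32πρ/15)·(c a⁴)/L < 0` (i.e. the eigenvalues
`λ₂^± = −1/2 ± (1/2)√(1 + (32πρ/15)(c a⁴)/L)` are non-real) hold simultaneously
iff `a < c < 3a`. -/
theorem greenhill_instability_zone (a c ρ : ℝ) (ha : 0 < a) (hc : 0 < c) (hρ : 0 < ρ) :
    ((4 * π * ρ / 15) * a ^ 2 * c * (a ^ 2 - c ^ 2) < 0 ∧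
      1 + (32 * π * ρ / 15) * (c * a ^ 4) / ((4 * π * ρ / 15) * a ^ 2 * c * (a ^ 2 - c ^ 2))
        < 0) ↔
    (a < c ∧ c < 3 * a) :=
  greenhill_instability_zone_general a c ρ ha hρ
end

section
/- Let g > 0, k₁ > 0, k₂ < 0 (a saddle), c₁ > 0, c₂ > 0, and let ω be any real number. Set a₃ = c₁(gk₂ − ω²) + c₂(gk₁ − ω²) and a₄ = (gk₁ − ω²)(gk₂ − ω²). Then a₃ > 0 and a₄ > 0 cannot hold simultaneously; consequently the characteristic polynomial λ⁴ + (c₁ + c₂)λ³ + (g(k₁ + k₂) + 2ω² + c₁c₂)λ² + a₃λ + a₄ of Brouwer's damped rotating saddle has a root with non-negative real part for every rotation speed ω, i.e. a rotating saddle is always unstable in the presence of any positive damping. -/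
open Polynomial in
lemma quartic_root' (a b c d : ℂ) : ∃ z : ℂ, z^4 + a*z^3 + b*z^2 + c*z + d = 0 := by
  have hd : (X^4 + C a * X^3 + C b * X^2 + C c * X + C d : ℂ[X]).degree = 4 := by
    compute_degree!
  obtain ⟨z, hz⟩ := Complex.exists_root (f := X^4 + C a * X^3 + C b * X^2 + C c * X + C d)
    (by rw [hd]; norm_num)
  exact ⟨z, by simpa [Polynomial.IsRoot] using hz⟩

open Polynomial in
lemma cubic_root' (a b c : ℂ) : ∃ z : ℂ, z^3 + a*z^2 + b*z + c = 0 := by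
  have hd : (X^3 + C a * X^2 + C b * X + C c : ℂ[X]).degree = 3 := by
    compute_degree!
  obtain ⟨z, hz⟩ := Complex.exists_root (f := X^3 + C a * X^2 + C b * X + C c)
    (by rw [hd]; norm_num)
  exact ⟨z, by simpa [Polynomial.IsRoot] using hz⟩

open Polynomial in
lemma quadratic_root' (a b : ℂ) : ∃ z : ℂ, z^2 + a*z + b = 0 := by
  have hd : (X^2 + C a * X + C b : ℂ[X]).degree = 2 := by
    compute_degree!
  obtain ⟨z, hz⟩ := Complex.exists_root (f := X^2 + C a * X + C b)
    (by rw [hd]; norm_num)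
  exact ⟨z, by simpa [Polynomial.IsRoot] using hz⟩

lemma quartic_factor (a b c d : ℂ) :
    ∃ r₁ r₂ r₃ r₄ : ℂ, ∀ z : ℂ,
      z^4 + a*z^3 + b*z^2 + c*z + d = (z - r₁)*(z - r₂)*(z - r₃)*(z - r₄) := by
  obtain ⟨r₁, h₁⟩ := quartic_root' a b c d
  obtain ⟨r₂, h₂⟩ := cubic_root' (a + r₁) (b + a*r₁ + r₁^2) (c + b*r₁ + a*r₁^2 + r₁^3)
  obtain ⟨r₃, h₃⟩ := quadratic_root' (a + r₁ + r₂) (b + a*r₁ + r₁^2 + (a+r₁)*r₂ + r₂^2)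
  refine ⟨r₁, r₂, r₃, -(a + r₁ + r₂ + r₃), fun z => ?_⟩
  linear_combination h₁ + (z - r₁)*h₂ + (z-r₁)*(z-r₂)*h₃

/-- A monic real quartic whose constant coefficient `a₄` is positive and whose
linear coefficient `a₃` is negative has a complex root with nonnegative real part. -/
lemma quartic_unstable (a₁ a₂ a₃ a₄ : ℝ) (hA3 : a₃ < 0) (hA4 : 0 < a₄) :
    ∃ z : ℂ, z^4 + (a₁:ℂ)*z^3 + (a₂:ℂ)*z^2 + (a₃:ℂ)*z + (a₄:ℂ) = 0 ∧ 0 ≤ z.re := by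
  obtain ⟨r₁, r₂, r₃, r₄, H⟩ := quartic_factor (a₁:ℂ) a₂ a₃ a₄
  have hroot : ∀ r : ℂ, (r = r₁ ∨ r = r₂ ∨ r = r₃ ∨ r = r₄) →
      r^4 + (a₁:ℂ)*r^3 + (a₂:ℂ)*r^2 + (a₃:ℂ)*r + (a₄:ℂ) = 0 := by
    rintro r (rfl | rfl | rfl | rfl) <;> rw [H] <;> ring
  by_cases h1 : 0 ≤ r₁.re
  · exact ⟨r₁, hroot r₁ (Or.inl rfl), h1⟩
  by_cases h2 : 0 ≤ r₂.re
  · exact ⟨r₂, hroot r₂ (Or.inr (Or.inl rfl)), h2⟩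
  by_cases h3 : 0 ≤ r₃.re
  · exact ⟨r₃, hroot r₃ (Or.inr (Or.inr (Or.inl rfl))), h3⟩
  by_cases h4 : 0 ≤ r₄.re
  · exact ⟨r₄, hroot r₄ (Or.inr (Or.inr (Or.inr rfl))), h4⟩
  exfalso
  push_neg at h1 h2 h3 h4
  have hn : ∀ r : ℂ, r.re < 0 → r ≠ 0 := by
    rintro r hr rfl; simp at hr
  have n₁ := hn r₁ h1; have n₂ := hn r₂ h2; have n₃ := hn r₃ h3; have n₄ := hn r₄ h4
  have hv4 : (a₄:ℂ) = r₁*r₂*r₃*r₄ := by linear_combination H 0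
  have hv3 : (a₃:ℂ) = -(r₁*r₂*r₃ + r₁*r₂*r₄ + r₁*r₃*r₄ + r₂*r₃*r₄) := by
    linear_combination (2/3)*(H 1) - (2/3)*(H (-1)) - (1/12)*(H 2) + (1/12)*(H (-2))
  have hinv : r₁*r₂*r₃ + r₁*r₂*r₄ + r₁*r₃*r₄ + r₂*r₃*r₄
      = (r₁*r₂*r₃*r₄) * (r₁⁻¹ + r₂⁻¹ + r₃⁻¹ + r₄⁻¹) := by
    field_simp; ring
  have hsum : (a₃:ℂ) = -((a₄:ℂ) * (r₁⁻¹ + r₂⁻¹ + r₃⁻¹ + r₄⁻¹)) := by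
    rw [hv3, hinv, ← hv4]
  have hSre : (r₁⁻¹ + r₂⁻¹ + r₃⁻¹ + r₄⁻¹).re < 0 := by
    have : ∀ r : ℂ, r.re < 0 → r ≠ 0 → (r⁻¹).re < 0 := by
      intro r hr hne
      rw [Complex.inv_re]
      exact div_neg_of_neg_of_pos hr (Complex.normSq_pos.2 hne)
    have i₁ := this r₁ h1 n₁; have i₂ := this r₂ h2 n₂
    have i₃ := this r₃ h3 n₃; have i₄ := this r₄ h4 n₄
    simp only [Complex.add_re]; linarith
  have : a₃ = -(a₄ * (r₁⁻¹ + r₂⁻¹ + r₃⁻¹ + r₄⁻¹).re) := by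
    have := congrArg Complex.re hsum
    simpa [Complex.re_ofReal_mul] using this
  nlinarith [mul_pos hA4 (neg_pos.2 hSre)]

/-- A monic real quartic with nonpositive constant coefficient has a nonnegative real root. -/
lemma quartic_real_root (a₁ a₂ a₃ a₄ : ℝ) (h : a₄ ≤ 0) :
    ∃ x : ℝ, 0 ≤ x ∧ x^4 + a₁*x^3 + a₂*x^2 + a₃*x + a₄ = 0 := by
  set f : ℝ → ℝ := fun x => x^4 + a₁*x^3 + a₂*x^2 + a₃*x + a₄ with hf
  set M : ℝ := 1 + |a₁| + |a₂| + |a₃| + |a₄| with hM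
  have hcont : ContinuousOn f (Set.Icc 0 M) := by fun_prop
  have hM1 : 1 ≤ M := by
    have := abs_nonneg a₁; have := abs_nonneg a₂; have := abs_nonneg a₃
    have := abs_nonneg a₄; linarith
  have hfM : 0 ≤ f M := by
    have h1 : -|a₁| ≤ a₁ := neg_abs_le a₁
    have h2 : -|a₂| ≤ a₂ := neg_abs_le a₂
    have h3 : -|a₃| ≤ a₃ := neg_abs_le a₃
    have h4 : -|a₄| ≤ a₄ := neg_abs_le a₄
    have hMp : 0 < M := by linarith
    have e2 : M^2 ≤ M^3 := by nlinarith
    have e1 : M ≤ M^3 := by nlinarith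
    have e0 : 1 ≤ M^3 := by nlinarith
    have key : M^4 = M^3 + abs a₁ * M^3 + abs a₂ * M^3 + abs a₃ * M^3 + abs a₄ * M^3 := by
      rw [hM]; ring
    simp only [hf]
    nlinarith [mul_nonneg (abs_nonneg a₂) (sub_nonneg.2 e2),
      mul_nonneg (abs_nonneg a₃) (sub_nonneg.2 e1),
      mul_nonneg (abs_nonneg a₄) (sub_nonneg.2 e0),
      mul_le_mul_of_nonneg_right h1 (le_of_lt (by positivity : (0:ℝ) < M^3)),
      mul_le_mul_of_nonneg_right h2 (le_of_lt (by positivity : (0:ℝ) < M^2)),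
      mul_le_mul_of_nonneg_right h3 hMp.le]
  have h0 : f 0 ≤ 0 := by simp only [hf]; nlinarith
  obtain ⟨x, hx, hfx⟩ := intermediate_value_Icc (by linarith : (0:ℝ) ≤ M) hcont ⟨h0, hfM⟩
  exact ⟨x, hx.1, hfx⟩

/-- Brouwer's damped rotating saddle is always unstable: for a saddle (`k₁ > 0 > k₂`)
with positive damping `c₁, c₂ > 0`, the coefficients
`a₃ = c₁(gk₂ − ω²) + c₂(gk₁ − ω²)` and `a₄ = (gk₁ − ω²)(gk₂ − ω²)` cannot both be
positive, and consequently the characteristic polynomial has a root with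
non-negative real part for every rotation speed `ω`. -/
theorem brouwer_damped_saddle_unstable (g k₁ k₂ c₁ c₂ ω : ℝ)
    (hg : 0 < g) (hk₁ : 0 < k₁) (hk₂ : k₂ < 0) (hc₁ : 0 < c₁) (hc₂ : 0 < c₂) :
    ¬ (0 < c₁ * (g * k₂ - ω ^ 2) + c₂ * (g * k₁ - ω ^ 2) ∧
        0 < (g * k₁ - ω ^ 2) * (g * k₂ - ω ^ 2)) ∧
    ∃ z : ℂ, z ^ 4 + ((c₁ + c₂ : ℝ) : ℂ) * z ^ 3
        + ((g * (k₁ + k₂) + 2 * ω ^ 2 + c₁ * c₂ : ℝ) : ℂ) * z ^ 2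
        + ((c₁ * (g * k₂ - ω ^ 2) + c₂ * (g * k₁ - ω ^ 2) : ℝ) : ℂ) * z
        + (((g * k₁ - ω ^ 2) * (g * k₂ - ω ^ 2) : ℝ) : ℂ) = 0 ∧ 0 ≤ z.re := by
  have hB : g * k₂ - ω ^ 2 < 0 := by nlinarith [sq_nonneg ω, mul_pos hg (neg_pos.2 hk₂)]
  set A1 : ℝ := c₁ + c₂ with hA1
  set A2 : ℝ := g * (k₁ + k₂) + 2 * ω ^ 2 + c₁ * c₂ with hA2
  set A3 : ℝ := c₁ * (g * k₂ - ω ^ 2) + c₂ * (g * k₁ - ω ^ 2) with hA3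
  set A4 : ℝ := (g * k₁ - ω ^ 2) * (g * k₂ - ω ^ 2) with hA4
  have key : 0 < A4 → A3 < 0 := by
    intro h4
    have hA : g * k₁ - ω ^ 2 < 0 := by
      rcases lt_or_ge (g * k₁ - ω ^ 2) 0 with h | h
      · exact h
      · rw [hA4] at h4; nlinarith
    rw [hA3]
    nlinarith [mul_pos hc₁ (neg_pos.2 hB), mul_pos hc₂ (neg_pos.2 hA)]
  constructor
  · rintro ⟨h3, h4⟩
    exact absurd h3 (not_lt.2 (key h4).le)
  · rcases lt_trichotomy A4 0 with h4 | h4 | h4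
    · obtain ⟨x, hx0, hx⟩ := quartic_real_root A1 A2 A3 A4 h4.le
      refine ⟨(x:ℂ), ?_, by simpa using hx0⟩
      exact_mod_cast congrArg (Complex.ofReal) hx
    · refine ⟨0, ?_, le_refl _⟩
      simp [h4]
    · obtain ⟨z, hz, hzre⟩ := quartic_unstable A1 A2 A3 A4 (key h4) h4
      exact ⟨z, by linear_combination hz, hzre⟩
end

section
/- Let m > 0, l > 0, c > 0 and let P be real. All complex roots of the characteristic polynomial 2m²l⁴λ⁴ + (7c − 2Pl)ml²λ² + c² of the undamped Ziegler pendulum are simple and purely imaginary if and only if P < (7/2 − √2)·c/l. Thus the critical follower load of the undamped Ziegler pendulum is P_k = (7/2 − √2)c/l. -/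
open Polynomial

/-- Factorization of the biquadratic. -/
lemma ziegler_quartic_fac (a b d w v : ℂ) (h1 : a * (w ^ 2 + v ^ 2) = b)
    (h2 : a * (w ^ 2 * v ^ 2) = d) :
    C a * X ^ 4 + C b * X ^ 2 + C d
      = C a * ((X - C (w * Complex.I)) * (X - C (-(w * Complex.I))) *
          ((X - C (v * Complex.I)) * (X - C (-(v * Complex.I))))) := by
  apply Polynomial.funext
  intro x
  simp only [eval_add, eval_mul, eval_pow, eval_sub, eval_C, eval_X, eval_neg]
  rw [← h1, ← h2]
  linear_combination (a * (w ^ 2 + v ^ 2) * x ^ 2 + a * w ^ 2 * v ^ 2 * (1 - Complex.I ^ 2)) *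
    Complex.I_sq

lemma ziegler_mult_four (a z1 z2 z3 z4 x : ℂ) (ha : a ≠ 0) :
    rootMultiplicity x (C a * ((X - C z1) * (X - C z2) * ((X - C z3) * (X - C z4))))
      = ((if x = z1 then 1 else 0) + (if x = z2 then 1 else 0))
        + ((if x = z3 then 1 else 0) + (if x = z4 then 1 else 0)) := by
  have h1 : (X - C z1 : ℂ[X]) ≠ 0 := X_sub_C_ne_zero z1
  have h2 : (X - C z2 : ℂ[X]) ≠ 0 := X_sub_C_ne_zero z2
  have h3 : (X - C z3 : ℂ[X]) ≠ 0 := X_sub_C_ne_zero z3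
  have h4 : (X - C z4 : ℂ[X]) ≠ 0 := X_sub_C_ne_zero z4
  have hC : (C a : ℂ[X]) ≠ 0 := by simpa using ha
  rw [rootMultiplicity_mul (mul_ne_zero hC (mul_ne_zero (mul_ne_zero h1 h2) (mul_ne_zero h3 h4))),
    rootMultiplicity_C,
    rootMultiplicity_mul (mul_ne_zero (mul_ne_zero h1 h2) (mul_ne_zero h3 h4)),
    rootMultiplicity_mul (mul_ne_zero h1 h2),
    rootMultiplicity_mul (mul_ne_zero h3 h4),
    rootMultiplicity_X_sub_C, rootMultiplicity_X_sub_C,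
    rootMultiplicity_X_sub_C, rootMultiplicity_X_sub_C, zero_add]

lemma ziegler_mulI_ne (a b : ℝ) (h : a ≠ b) :
    (a : ℂ) * Complex.I ≠ (b : ℂ) * Complex.I := fun he =>
  h (by exact_mod_cast mul_right_cancel₀ Complex.I_ne_zero he)

lemma ziegler_mulI_ne_neg (a b : ℝ) (h : a ≠ -b) :
    (a : ℂ) * Complex.I ≠ -((b : ℂ) * Complex.I) := by
  intro he
  apply ziegler_mulI_ne a (-b) h
  rw [he]; push_cast; ring

set_option maxHeartbeats 1000000 in
/-- Critical follower load of the undamped Ziegler pendulum: all complex roots of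
`2m²l⁴λ⁴ + (7c − 2Pl)ml²λ² + c²` are simple and purely imaginary iff
`P < (7/2 − √2)·c/l`. -/
theorem ziegler_undamped_critical_load (m l c P : ℝ)
    (hm : 0 < m) (hl : 0 < l) (hc : 0 < c) :
    (∀ z : ℂ, (C ((2 * m ^ 2 * l ^ 4 : ℝ) : ℂ) * X ^ 4
        + C (((7 * c - 2 * P * l) * m * l ^ 2 : ℝ) : ℂ) * X ^ 2
        + C ((c ^ 2 : ℝ) : ℂ)).IsRoot z →
      z.re = 0 ∧ (C ((2 * m ^ 2 * l ^ 4 : ℝ) : ℂ) * X ^ 4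
        + C (((7 * c - 2 * P * l) * m * l ^ 2 : ℝ) : ℂ) * X ^ 2
        + C ((c ^ 2 : ℝ) : ℂ)).rootMultiplicity z = 1) ↔
    P < (7 / 2 - Real.sqrt 2) * c / l := by
  have hs2 : Real.sqrt 2 ^ 2 = 2 := Real.sq_sqrt (by norm_num)
  have hs2pos : 0 < Real.sqrt 2 := Real.sqrt_pos.mpr (by norm_num)
  set A : ℝ := 2 * m ^ 2 * l ^ 4 with hAdef
  set B : ℝ := (7 * c - 2 * P * l) * m * l ^ 2 with hBdef
  have hA : 0 < A := by positivity
  have hA0 : ((A : ℝ) : ℂ) ≠ 0 := by exact_mod_cast ne_of_gt hA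
  constructor
  · intro H
    rw [← not_le]
    intro hPge
    have hPl : (7 / 2 - Real.sqrt 2) * c ≤ P * l := by
      rw [div_le_iff₀ hl] at hPge; linarith
    have hble : 7 * c - 2 * P * l ≤ 2 * Real.sqrt 2 * c := by linarith
    rcases eq_or_lt_of_le hble with heq | hlt
    · -- equality: double root
      have hBval : B = 2 * Real.sqrt 2 * c * (m * l ^ 2) := by rw [hBdef, heq]; ring
      have hBpos : 0 < B := by rw [hBval]; positivity
      have hB2 : B ^ 2 = 4 * A * c ^ 2 := by
        rw [hBval, hAdef]; linear_combination (4 * c ^ 2 * m ^ 2 * l ^ 4) * hs2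
      set s : ℝ := B / (2 * A) with hsdef
      have hspos : 0 < s := by positivity
      set u : ℝ := Real.sqrt s with hudef
      have hu2 : u ^ 2 = s := Real.sq_sqrt hspos.le
      have hupos : 0 < u := Real.sqrt_pos.mpr hspos
      have e1 : A * (u ^ 2 + u ^ 2) = B := by
        rw [hu2, hsdef]; field_simp; ring
      have e2 : A * (u ^ 2 * u ^ 2) = c ^ 2 := by
        rw [hu2, hsdef]; field_simp; linear_combination hB2
      have ce1 : ((A : ℝ) : ℂ) * (((u : ℝ) : ℂ) ^ 2 + ((u : ℝ) : ℂ) ^ 2) = ((B : ℝ) : ℂ) := by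
        exact_mod_cast e1
      have ce2 : ((A : ℝ) : ℂ) * (((u : ℝ) : ℂ) ^ 2 * ((u : ℝ) : ℂ) ^ 2)
          = ((c ^ 2 : ℝ) : ℂ) := by exact_mod_cast e2
      have hfac := ziegler_quartic_fac ((A : ℝ) : ℂ) ((B : ℝ) : ℂ) ((c ^ 2 : ℝ) : ℂ)
        ((u : ℝ) : ℂ) ((u : ℝ) : ℂ) ce1 ce2
      have hroot : IsRoot (C ((A : ℝ) : ℂ) * X ^ 4 + C ((B : ℝ) : ℂ) * X ^ 2
          + C ((c ^ 2 : ℝ) : ℂ)) (((u : ℝ) : ℂ) * Complex.I) := by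
        rw [hfac]
        simp only [IsRoot.def, eval_mul, eval_sub, eval_C, eval_X, sub_self, zero_mul, mul_zero]
      obtain ⟨-, hmult⟩ := H (((u : ℝ) : ℂ) * Complex.I) hroot
      rw [hfac, ziegler_mult_four _ _ _ _ _ _ hA0] at hmult
      have hne : ((u : ℝ) : ℂ) * Complex.I ≠ -(((u : ℝ) : ℂ) * Complex.I) :=
        ziegler_mulI_ne_neg u u (by intro h; linarith)
      rw [if_pos rfl, if_neg hne] at hmult
      norm_num at hmult
    · -- strict: no purely imaginary roots at all
      have hdeg : (C ((A : ℝ) : ℂ) * X ^ 4 + C ((B : ℝ) : ℂ) * X ^ 2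
          + C ((c ^ 2 : ℝ) : ℂ)).degree = 4 := by
        compute_degree!
        exact ne_of_gt hA
      obtain ⟨z, hz⟩ := Complex.exists_root (by rw [hdeg]; norm_num)
      obtain ⟨hre, -⟩ := H z hz
      set y : ℝ := z.im with hydef
      have hzy : z = (y : ℂ) * Complex.I := by
        apply Complex.ext <;> simp [hre, hydef]
      have hz2 : ((A : ℝ) : ℂ) * z ^ 4 + ((B : ℝ) : ℂ) * z ^ 2 + ((c ^ 2 : ℝ) : ℂ) = 0 := by
        simpa [IsRoot, eval_add, eval_mul, eval_pow, eval_C, eval_X] using hz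
      have h4 : z ^ 4 = ((y ^ 4 : ℝ) : ℂ) := by
        rw [hzy, mul_pow, Complex.I_pow_four]; push_cast; ring
      have h2' : z ^ 2 = -((y ^ 2 : ℝ) : ℂ) := by
        rw [hzy, mul_pow, Complex.I_sq]; push_cast; ring
      rw [h4, h2'] at hz2
      have hre2 : A * y ^ 4 - B * y ^ 2 + c ^ 2 = 0 := by
        have h0 : ((A * y ^ 4 - B * y ^ 2 + c ^ 2 : ℝ) : ℂ) = 0 := by
          push_cast at hz2 ⊢; linear_combination hz2
        exact_mod_cast h0
      have key : A * y ^ 4 - B * y ^ 2 + c ^ 2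
          = (Real.sqrt 2 * m * l ^ 2 * y ^ 2 - c) ^ 2
            + (2 * Real.sqrt 2 * c - (7 * c - 2 * P * l)) * (m * l ^ 2) * y ^ 2 := by
        rw [hAdef, hBdef]; linear_combination (-(m ^ 2 * l ^ 4 * y ^ 4)) * hs2
      rcases eq_or_ne y 0 with hy | hy
      · rw [hy] at hre2; nlinarith [hc]
      · have hy2 : 0 < y ^ 2 := by positivity
        have hT : 0 < (2 * Real.sqrt 2 * c - (7 * c - 2 * P * l)) * (m * l ^ 2) * y ^ 2 :=
          mul_pos (mul_pos (by linarith) (by positivity)) hy2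
        nlinarith [sq_nonneg (Real.sqrt 2 * m * l ^ 2 * y ^ 2 - c)]
  · intro hP z hz
    have hb : 2 * Real.sqrt 2 * c < 7 * c - 2 * P * l := by
      rw [lt_div_iff₀ hl] at hP; linarith
    have hbpos : 0 < 7 * c - 2 * P * l := by nlinarith
    have hBpos : 0 < B := by
      rw [hBdef]; exact mul_pos (mul_pos hbpos hm) (pow_pos hl 2)
    have hb2 : (2 * Real.sqrt 2 * c) ^ 2 = 8 * c ^ 2 := by
      linear_combination (4 * c ^ 2) * hs2
    have h8 : 8 * c ^ 2 < (7 * c - 2 * P * l) ^ 2 := by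
      rw [← hb2]
      exact pow_lt_pow_left₀ hb (by positivity) (by norm_num)
    have hdisc : 0 < B ^ 2 - 4 * A * c ^ 2 := by
      rw [hAdef, hBdef]
      nlinarith [mul_pos (pow_pos hm 2) (pow_pos hl 4)]
    set D : ℝ := Real.sqrt (B ^ 2 - 4 * A * c ^ 2) with hDdef
    have hDpos : 0 < D := Real.sqrt_pos.mpr hdisc
    have hD2 : D ^ 2 = B ^ 2 - 4 * A * c ^ 2 := Real.sq_sqrt hdisc.le
    have hDB : D < B := by nlinarith [mul_pos hA (mul_pos hc hc)]
    set s : ℝ := (B + D) / (2 * A) with hsdef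
    set t : ℝ := (B - D) / (2 * A) with htdef
    have hspos : 0 < s := div_pos (by linarith) (by linarith)
    have htpos : 0 < t := div_pos (by linarith) (by linarith)
    have hts : t < s := by
      rw [hsdef, htdef]
      exact (div_lt_div_iff_of_pos_right (by linarith)).mpr (by linarith)
    set u : ℝ := Real.sqrt s with hudef
    set v : ℝ := Real.sqrt t with hvdef
    have hu2 : u ^ 2 = s := Real.sq_sqrt hspos.le
    have hv2 : v ^ 2 = t := Real.sq_sqrt htpos.le
    have hupos : 0 < u := Real.sqrt_pos.mpr hspos
    have hvpos : 0 < v := Real.sqrt_pos.mpr htpos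
    have hvu : v < u := by
      rw [hudef, hvdef]; exact Real.sqrt_lt_sqrt htpos.le hts
    have e1 : A * (u ^ 2 + v ^ 2) = B := by
      rw [hu2, hv2, hsdef, htdef]; field_simp; ring
    have e2 : A * (u ^ 2 * v ^ 2) = c ^ 2 := by
      rw [hu2, hv2, hsdef, htdef]; field_simp; linear_combination (-1 : ℝ) * hD2
    have ce1 : ((A : ℝ) : ℂ) * (((u : ℝ) : ℂ) ^ 2 + ((v : ℝ) : ℂ) ^ 2) = ((B : ℝ) : ℂ) := by
      exact_mod_cast e1
    have ce2 : ((A : ℝ) : ℂ) * (((u : ℝ) : ℂ) ^ 2 * ((v : ℝ) : ℂ) ^ 2)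
        = ((c ^ 2 : ℝ) : ℂ) := by exact_mod_cast e2
    have hfac := ziegler_quartic_fac ((A : ℝ) : ℂ) ((B : ℝ) : ℂ) ((c ^ 2 : ℝ) : ℂ)
      ((u : ℝ) : ℂ) ((v : ℝ) : ℂ) ce1 ce2
    rw [hfac] at hz ⊢
    have hz' : ((A : ℝ) : ℂ) * ((z - ((u : ℝ) : ℂ) * Complex.I) * (z - -(((u : ℝ) : ℂ) * Complex.I))
        * ((z - ((v : ℝ) : ℂ) * Complex.I) * (z - -(((v : ℝ) : ℂ) * Complex.I)))) = 0 := by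
      simpa only [IsRoot.def, eval_mul, eval_sub, eval_C, eval_X] using hz
    -- distinctness facts
    have huv : u ≠ v := ne_of_gt hvu
    have d12 : ((u : ℝ) : ℂ) * Complex.I ≠ -(((u : ℝ) : ℂ) * Complex.I) :=
      ziegler_mulI_ne_neg u u (by intro h; linarith)
    have d13 : ((u : ℝ) : ℂ) * Complex.I ≠ ((v : ℝ) : ℂ) * Complex.I :=
      ziegler_mulI_ne u v huv
    have d14 : ((u : ℝ) : ℂ) * Complex.I ≠ -(((v : ℝ) : ℂ) * Complex.I) :=
      ziegler_mulI_ne_neg u v (by intro h; linarith)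
    have d31 : ((v : ℝ) : ℂ) * Complex.I ≠ ((u : ℝ) : ℂ) * Complex.I := d13.symm
    have d32 : ((v : ℝ) : ℂ) * Complex.I ≠ -(((u : ℝ) : ℂ) * Complex.I) :=
      ziegler_mulI_ne_neg v u (by intro h; linarith)
    have d34 : ((v : ℝ) : ℂ) * Complex.I ≠ -(((v : ℝ) : ℂ) * Complex.I) :=
      ziegler_mulI_ne_neg v v (by intro h; linarith)
    have d21 : -(((u : ℝ) : ℂ) * Complex.I) ≠ ((u : ℝ) : ℂ) * Complex.I := d12.symm
    have d23 : -(((u : ℝ) : ℂ) * Complex.I) ≠ ((v : ℝ) : ℂ) * Complex.I := d32.symm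
    have d24 : -(((u : ℝ) : ℂ) * Complex.I) ≠ -(((v : ℝ) : ℂ) * Complex.I) := fun h =>
      d13 (neg_inj.mp h)
    have d41 : -(((v : ℝ) : ℂ) * Complex.I) ≠ ((u : ℝ) : ℂ) * Complex.I := d14.symm
    have d42 : -(((v : ℝ) : ℂ) * Complex.I) ≠ -(((u : ℝ) : ℂ) * Complex.I) := fun h =>
      d31 (neg_inj.mp h)
    have d43 : -(((v : ℝ) : ℂ) * Complex.I) ≠ ((v : ℝ) : ℂ) * Complex.I := d34.symm
    rcases mul_eq_zero.mp hz' with h | h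
    · exact absurd h hA0
    rcases mul_eq_zero.mp h with h | h <;> rcases mul_eq_zero.mp h with h | h <;>
      rw [sub_eq_zero] at h <;> subst h
    · refine ⟨by simp, ?_⟩
      rw [ziegler_mult_four _ _ _ _ _ _ hA0, if_pos rfl, if_neg d12, if_neg d13, if_neg d14]
    · refine ⟨by simp, ?_⟩
      rw [ziegler_mult_four _ _ _ _ _ _ hA0, if_neg d21, if_pos rfl, if_neg d23, if_neg d24]
    · refine ⟨by simp, ?_⟩
      rw [ziegler_mult_four _ _ _ _ _ _ hA0, if_neg d31, if_neg d32, if_pos rfl, if_neg d34]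
    · refine ⟨by simp, ?_⟩
      rw [ziegler_mult_four _ _ _ _ _ _ hA0, if_neg d41, if_neg d42, if_neg d43, if_pos rfl]
end
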